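/- arXiv:2209.02179 — 6 statements merged into one kernel-verified Lean document; each statement's English description precedes it below -/
import Mathlib

section
/- Let n, p ≥ 1, L > 0, 0 < μ ≤ G, and 0 < η ≤ μ/(8L). Let V_1, …, V_n : ℝ^p → ℝ be differentiable functions whose gradients are L-Lipschitz, set V := (1/n)∑_{i=1}^n V_i, and assume V(x) ≤ V^* for all x ∈ ℝ^p. Let T ≥ 0 and suppose that for each t = 0, …, T we are given: a vector θ^t ∈ ℝ^{np} with blocks θ_i^t and block average θ̄^t; a vector y^{t+1} ∈ ℝ^{np} with blocks y_i^{t+1} and block average ȳ^{t+1}; real symmetric p×p matrices H_i^t (i = 1, …, n) with (1/G) I_p ⪯ H_i^t ⪯ (1/μ) I_p; and the vector d^t ∈ ℝ^{np} with blocks d_i^t := H_i^t y_i^{t+1} and block average d̄^t. Assume θ̄^{t+1} = θ̄^t + η d̄^t for all 0 ≤ t ≤ T−1. Then (1/n) ∑_{t=0}^T ∑_{i=1}^n ‖∇V(θ_i^t)‖² ≤ 8G²(V^* − V(θ̄^0))/(ημ) − (G²/n) ∑_{t=0}^T ‖d^t‖² + (76G²/μ²) ∑_{t=0}^T ‖(1/n)∑_{i=1}^n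 ∇V_i(θ_i^t) − ȳ^{t+1}‖² + (10G²/(nμ²)) ∑_{t=0}^T ‖y^{t+1} − 𝟙_n⊗ȳ^{t+1}‖² + (82G²L²/(nμ²)) ∑_{t=0}^T ‖θ^t − 𝟙_n⊗θ̄^t‖². -/
open scoped BigOperators

/-- Spectral (ℓ²-operator) norm of a real matrix. -/
noncomputable def specNorm {n m : ℕ} (M : Matrix (Fin n) (Fin m) ℝ) : ℝ :=
  ‖LinearMap.toContinuousLinearMap (Matrix.toEuclideanLin M)‖

/-- ℝ^{np}, viewed as n blocks of size p, with the Euclidean norm. -/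
abbrev BlockVec (n p : ℕ) : Type := PiLp 2 (fun _ : Fin n => EuclideanSpace ℝ (Fin p))

/-- Block average ā := (1/n) ∑ᵢ aᵢ. -/
noncomputable def blockAvg {n p : ℕ} (a : BlockVec n p) : EuclideanSpace ℝ (Fin p) :=
  (n : ℝ)⁻¹ • ∑ i, a i

/-- 𝟙_n ⊗ x : the block vector all of whose blocks equal x. -/
def consensus {n p : ℕ} (x : EuclideanSpace ℝ (Fin p)) : BlockVec n p := WithLp.toLp 2 (fun _ => x)

/-- Action of W ⊗ I_p on a block vector. -/
noncomputable def kronApply {n p : ℕ} (W : Matrix (Fin n) (Fin n) ℝ) (a : BlockVec n p) :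
    BlockVec n p := WithLp.toLp 2 (fun i => ∑ j, W i j • a j)

/-- The all-ones matrix J_n. -/
def onesMat (n : ℕ) : Matrix (Fin n) (Fin n) ℝ := Matrix.of fun _ _ => 1

/- ### Auxiliary lemmas -/

open Matrix

section MatrixAux
variable {p : ℕ}

lemma aux_psd_smul (c : ℝ) (hc : 0 ≤ c) {M : Matrix (Fin p) (Fin p) ℝ} (hM : M.PosSemidef) :
    (c • M).PosSemidef := by
  exact hM.smul hc

lemma aux_dot_symm {H : Matrix (Fin p) (Fin p) ℝ} (hH : H.IsSymm) (a b : Fin p → ℝ) :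
    a ⬝ᵥ (H *ᵥ b) = b ⬝ᵥ (H *ᵥ a) := by
  rw [dotProduct_mulVec, ← mulVec_transpose, hH.eq, dotProduct_comm]

lemma aux_psd_dot {H : Matrix (Fin p) (Fin p) ℝ} (hH : H.PosSemidef) (a : Fin p → ℝ) :
    0 ≤ a ⬝ᵥ (H *ᵥ a) := by
  simpa using hH.dotProduct_mulVec_nonneg a

variable {G μ : ℝ} {H : Matrix (Fin p) (Fin p) ℝ}

lemma aux_quad_low (hlow : (H - G⁻¹ • 1).PosSemidef) (a : Fin p → ℝ) :
    G⁻¹ * (a ⬝ᵥ a) ≤ a ⬝ᵥ (H *ᵥ a) := by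
  have h := aux_psd_dot hlow a
  simp only [sub_mulVec, smul_mulVec, one_mulVec, dotProduct_sub, dotProduct_smul,
    smul_eq_mul] at h
  linarith

lemma aux_quad_up (hup : ((μ⁻¹ • (1 : Matrix (Fin p) (Fin p) ℝ)) - H).PosSemidef)
    (a : Fin p → ℝ) :
    a ⬝ᵥ (H *ᵥ a) ≤ μ⁻¹ * (a ⬝ᵥ a) := by
  have h := aux_psd_dot hup a
  simp only [sub_mulVec, smul_mulVec, one_mulVec, dotProduct_sub, dotProduct_smul,
    smul_eq_mul] at h
  linarith

lemma aux_psd_of_bounds (hG : 0 < G) (hlow : (H - G⁻¹ • 1).PosSemidef) : H.PosSemidef := by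
  have h1 : ((G:ℝ)⁻¹ • (1 : Matrix (Fin p) (Fin p) ℝ)).PosSemidef :=
    aux_psd_smul _ (by positivity) Matrix.PosSemidef.one
  simpa using hlow.add h1

open scoped MatrixOrder in
lemma aux_quad_sq (hμ : 0 < μ) (hG : 0 < G) (hsymm : H.IsSymm)
    (hlow : (H - G⁻¹ • 1).PosSemidef)
    (hup : ((μ⁻¹ • (1 : Matrix (Fin p) (Fin p) ℝ)) - H).PosSemidef) (a : Fin p → ℝ) :
    μ * ((H *ᵥ a) ⬝ᵥ (H *ᵥ a)) ≤ a ⬝ᵥ (H *ᵥ a) := by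
  have hpsd : H.PosSemidef := aux_psd_of_bounds hG hlow
  set S := CFC.sqrt H with hSdef
  have hSS : S * S = H := CFC.sqrt_mul_sqrt_self H hpsd.nonneg
  have hSherm : Sᴴ = S := (CFC.sqrt_nonneg H).posSemidef.1.eq
  have hmid : ((1 : Matrix (Fin p) (Fin p) ℝ) - μ • H).PosSemidef := by
    have := aux_psd_smul μ hμ.le hup
    have heq : μ • ((μ⁻¹ • (1 : Matrix (Fin p) (Fin p) ℝ)) - H)
        = (1 : Matrix (Fin p) (Fin p) ℝ) - μ • H := by
      rw [smul_sub, smul_smul, mul_inv_cancel₀ hμ.ne', one_smul]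
    rwa [heq] at this
  have hconj : (S * ((1 : Matrix (Fin p) (Fin p) ℝ) - μ • H) * S).PosSemidef := by
    have := hmid.mul_mul_conjTranspose_same S
    rwa [hSherm] at this
  have hkey : S * ((1 : Matrix (Fin p) (Fin p) ℝ) - μ • H) * S = H - μ • (H * H) := by
    rw [Matrix.mul_sub, Matrix.mul_one, Matrix.sub_mul, Matrix.mul_smul, Matrix.smul_mul, hSS]
    congr 1
    rw [← hSS]
    noncomm_ring
  rw [hkey] at hconj
  have h := aux_psd_dot hconj a
  simp only [sub_mulVec, smul_mulVec, dotProduct_sub, dotProduct_smul, smul_eq_mul,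
    ← mulVec_mulVec] at h
  have h2 : a ⬝ᵥ (H *ᵥ (H *ᵥ a)) = (H *ᵥ a) ⬝ᵥ (H *ᵥ a) := aux_dot_symm hsymm a (H *ᵥ a)
  rw [h2] at h
  linarith

lemma aux_inner_dot (a b : EuclideanSpace ℝ (Fin p)) :
    (inner ℝ a b : ℝ) = (a : Fin p → ℝ) ⬝ᵥ (b : Fin p → ℝ) := by
  simp [PiLp.inner_apply, dotProduct, RCLike.inner_apply, mul_comm]

lemma aux_norm_sq_dot (a : EuclideanSpace ℝ (Fin p)) :
    ‖a‖ ^ 2 = (a : Fin p → ℝ) ⬝ᵥ (a : Fin p → ℝ) := by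
  rw [← aux_inner_dot, real_inner_self_eq_norm_sq]

lemma aux_matrix_step (hμ : 0 < μ) (hG : 0 < G) (hsymm : H.IsSymm)
    (hlow : (H - G⁻¹ • 1).PosSemidef)
    (hup : ((μ⁻¹ • (1 : Matrix (Fin p) (Fin p) ℝ)) - H).PosSemidef)
    (x w dd : EuclideanSpace ℝ (Fin p)) (hdd : (dd : Fin p → ℝ) = H *ᵥ (w : Fin p → ℝ)) :
    1/(2*G) * ‖x‖^2 + μ/2 * ‖dd‖^2 - 1/(2*μ) * ‖w - x‖^2 ≤ (inner ℝ x dd : ℝ) := by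
  have hsub : ((w - x : EuclideanSpace ℝ (Fin p)) : Fin p → ℝ)
      = (w : Fin p → ℝ) - (x : Fin p → ℝ) := rfl
  have hA := aux_quad_low hlow (x : Fin p → ℝ)
  have hB := aux_quad_sq hμ hG hsymm hlow hup (w : Fin p → ℝ)
  have hQ := aux_quad_up hup ((w : Fin p → ℝ) - (x : Fin p → ℝ))
  have hexp : ((w : Fin p → ℝ) - (x : Fin p → ℝ)) ⬝ᵥ (H *ᵥ ((w : Fin p → ℝ) - (x : Fin p → ℝ)))
      = (w : Fin p → ℝ) ⬝ᵥ (H *ᵥ w) - 2 * ((x : Fin p → ℝ) ⬝ᵥ (H *ᵥ w))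
        + (x : Fin p → ℝ) ⬝ᵥ (H *ᵥ x) := by
    rw [mulVec_sub, dotProduct_sub, sub_dotProduct, sub_dotProduct,
      aux_dot_symm hsymm (x : Fin p → ℝ) (w : Fin p → ℝ)]
    ring
  have hX : ‖x‖^2 = (x : Fin p → ℝ) ⬝ᵥ (x : Fin p → ℝ) := aux_norm_sq_dot x
  have hD : ‖dd‖^2 = (H *ᵥ (w : Fin p → ℝ)) ⬝ᵥ (H *ᵥ (w : Fin p → ℝ)) := by
    rw [aux_norm_sq_dot, hdd]
  have hU : ‖w - x‖^2 = ((w : Fin p → ℝ) - (x : Fin p → ℝ)) ⬝ᵥ ((w : Fin p → ℝ) - (x : Fin p → ℝ)) := by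
    rw [aux_norm_sq_dot, hsub]
  have hC : (inner ℝ x dd : ℝ) = (x : Fin p → ℝ) ⬝ᵥ (H *ᵥ (w : Fin p → ℝ)) := by
    rw [aux_inner_dot, hdd]
  have hUU : 0 ≤ ((w : Fin p → ℝ) - (x : Fin p → ℝ)) ⬝ᵥ ((w : Fin p → ℝ) - (x : Fin p → ℝ)) := by
    rw [← hU]; positivity
  rw [hX, hD, hU, hC]
  have h2 : (2:ℝ) * ((x : Fin p → ℝ) ⬝ᵥ (H *ᵥ (w : Fin p → ℝ)))
      = (w : Fin p → ℝ) ⬝ᵥ (H *ᵥ w) + (x : Fin p → ℝ) ⬝ᵥ (H *ᵥ x)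
        - ((w : Fin p → ℝ) - (x : Fin p → ℝ)) ⬝ᵥ (H *ᵥ ((w : Fin p → ℝ) - (x : Fin p → ℝ))) := by
    rw [hexp]; ring
  have hXnn : 0 ≤ (x : Fin p → ℝ) ⬝ᵥ (x : Fin p → ℝ) := by rw [← hX]; positivity
  ring_nf
  ring_nf at hA hB hQ h2
  linarith

lemma aux_matrix_step2 (hμ : 0 < μ) (hG : 0 < G) (hsymm : H.IsSymm)
    (hlow : (H - G⁻¹ • 1).PosSemidef)
    (hup : ((μ⁻¹ • (1 : Matrix (Fin p) (Fin p) ℝ)) - H).PosSemidef)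
    (w dd : EuclideanSpace ℝ (Fin p)) (hdd : (dd : Fin p → ℝ) = H *ᵥ (w : Fin p → ℝ)) :
    ‖dd‖^2 ≤ 1/μ^2 * ‖w‖^2 := by
  have hB := aux_quad_sq hμ hG hsymm hlow hup (w : Fin p → ℝ)
  have hW := aux_quad_up hup (w : Fin p → ℝ)
  have hD : ‖dd‖^2 = (H *ᵥ (w : Fin p → ℝ)) ⬝ᵥ (H *ᵥ (w : Fin p → ℝ)) := by
    rw [aux_norm_sq_dot, hdd]
  have hWn : ‖w‖^2 = (w : Fin p → ℝ) ⬝ᵥ (w : Fin p → ℝ) := aux_norm_sq_dot w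
  rw [hD, hWn]
  have h3 : μ * ((H *ᵥ (w : Fin p → ℝ)) ⬝ᵥ (H *ᵥ (w : Fin p → ℝ)))
      ≤ μ⁻¹ * ((w : Fin p → ℝ) ⬝ᵥ (w : Fin p → ℝ)) := le_trans hB hW
  have h4 := mul_le_mul_of_nonneg_left h3 (le_of_lt (inv_pos.mpr hμ))
  rw [← mul_assoc, inv_mul_cancel₀ hμ.ne', one_mul] at h4
  calc (H *ᵥ (w : Fin p → ℝ)) ⬝ᵥ (H *ᵥ (w : Fin p → ℝ))
      ≤ μ⁻¹ * (μ⁻¹ * ((w : Fin p → ℝ) ⬝ᵥ (w : Fin p → ℝ))) := h4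
    _ = 1/μ^2 * ((w : Fin p → ℝ) ⬝ᵥ (w : Fin p → ℝ)) := by
        rw [← mul_assoc, ← mul_inv, ← sq, inv_eq_one_div]

end MatrixAux

section AnalysisAux
variable {E : Type*} [NormedAddCommGroup E] [InnerProductSpace ℝ E] [CompleteSpace E]

lemma aux_descent (f : E → ℝ) (L : ℝ) (hL : 0 ≤ L) (hf : Differentiable ℝ f)
    (hlip : ∀ x x', ‖gradient f x - gradient f x'‖ ≤ L * ‖x - x'‖) (a b : E) :
    f a + (inner ℝ (gradient f a) (b - a) : ℝ) - L * ‖b - a‖^2 ≤ f b := by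
  have hgrad : ∀ x : E, fderiv ℝ f x = (InnerProductSpace.toDual ℝ E) (gradient f x) :=
    fun x => (hasGradientAt_iff_hasFDerivAt.mp (hf x).hasGradientAt).fderiv
  have hseg : ∀ x ∈ segment ℝ a b, ‖x - a‖ ≤ ‖b - a‖ := by
    intro x hx
    rw [segment_eq_image'] at hx
    obtain ⟨t, ht, rfl⟩ := hx
    rw [add_sub_cancel_left, norm_smul]
    calc ‖t‖ * ‖b - a‖ ≤ 1 * ‖b - a‖ := by
          apply mul_le_mul_of_nonneg_right _ (norm_nonneg _)
          rw [Real.norm_eq_abs, abs_le]; constructor <;> linarith [ht.1, ht.2]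
      _ = ‖b - a‖ := one_mul _
  have key := Convex.norm_image_sub_le_of_norm_hasFDerivWithin_le'
    (f := f) (f' := fun x => fderiv ℝ f x)
    (φ := (InnerProductSpace.toDual ℝ E) (gradient f a)) (s := segment ℝ a b)
    (C := L * ‖b - a‖)
    (fun x _ => (hf x).hasFDerivAt.hasFDerivWithinAt)
    (fun x hx => by
      show ‖fderiv ℝ f x - _‖ ≤ _
      rw [hgrad x, ← map_sub, LinearIsometryEquiv.norm_map]
      exact le_trans (hlip x a) (mul_le_mul_of_nonneg_left (hseg x hx) hL))
    (convex_segment a b) (left_mem_segment ℝ a b) (right_mem_segment ℝ a b)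
  rw [InnerProductSpace.toDual_apply_apply] at key
  rw [Real.norm_eq_abs] at key
  have := abs_le.mp key
  have h2 : L * ‖b - a‖ * ‖b - a‖ = L * ‖b - a‖^2 := by ring
  linarith [this.1]

lemma aux_pl (f : E → ℝ) (L Vstar : ℝ) (hL : 0 < L) (hf : Differentiable ℝ f)
    (hlip : ∀ x x', ‖gradient f x - gradient f x'‖ ≤ L * ‖x - x'‖)
    (hbdd : ∀ x, f x ≤ Vstar) (x : E) :
    1/(4*L) * ‖gradient f x‖^2 ≤ Vstar - f x := by
  have h := aux_descent f L hL.le hf hlip x (x + (2*L)⁻¹ • gradient f x)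
  rw [add_sub_cancel_left, real_inner_smul_right, real_inner_self_eq_norm_sq, norm_smul] at h
  have h2 : ‖(2*L)⁻¹‖ = (2*L)⁻¹ := by
    rw [Real.norm_eq_abs, abs_of_pos]; positivity
  rw [h2] at h
  have h3 := hbdd (x + (2*L)⁻¹ • gradient f x)
  have h4 : (2*L)⁻¹ * ‖gradient f x‖^2 - L * ((2*L)⁻¹ * ‖gradient f x‖)^2
      = 1/(4*L) * ‖gradient f x‖^2 := by
    field_simp
    ring
  nlinarith [h, h3, h4]

lemma aux_grad_avg (m : ℕ) (V : Fin m → E → ℝ) (hdiff : ∀ i, Differentiable ℝ (V i))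
    (Vbar : E → ℝ) (hVbar : Vbar = fun x => (m : ℝ)⁻¹ * ∑ i, V i x) (x : E) :
    gradient Vbar x = (m : ℝ)⁻¹ • ∑ i, gradient (V i) x := by
  have hg : ∀ i, (InnerProductSpace.toDual ℝ E) (gradient (V i) x) = fderiv ℝ (V i) x :=
    fun i => ((hasGradientAt_iff_hasFDerivAt.mp ((hdiff i) x).hasGradientAt).fderiv).symm
  have h1 : HasFDerivAt Vbar ((m:ℝ)⁻¹ • ∑ i, fderiv ℝ (V i) x) x := by
    rw [hVbar]
    have := (HasFDerivAt.sum (u := Finset.univ)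
      (fun i _ => (hdiff i x).hasFDerivAt)).const_mul ((m:ℝ)⁻¹)
    simpa using this
  have h2 : HasGradientAt Vbar ((m : ℝ)⁻¹ • ∑ i, gradient (V i) x) x := by
    rw [hasGradientAt_iff_hasFDerivAt, _root_.map_smul, map_sum]
    simp only [hg]
    exact h1
  exact h2.gradient

lemma aux_grad_avg_lip (m : ℕ) (hm : 1 ≤ m) (L : ℝ) (V : Fin m → E → ℝ)
    (hdiff : ∀ i, Differentiable ℝ (V i))
    (hlip : ∀ i x x', ‖gradient (V i) x - gradient (V i) x'‖ ≤ L * ‖x - x'‖)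
    (Vbar : E → ℝ) (hVbar : Vbar = fun x => (m : ℝ)⁻¹ * ∑ i, V i x) (x x' : E) :
    ‖gradient Vbar x - gradient Vbar x'‖ ≤ L * ‖x - x'‖ := by
  have hm0 : (0:ℝ) < m := by exact_mod_cast hm
  rw [aux_grad_avg m V hdiff Vbar hVbar x, aux_grad_avg m V hdiff Vbar hVbar x', ← smul_sub,
    ← Finset.sum_sub_distrib, norm_smul, Real.norm_eq_abs, abs_of_pos (by positivity)]
  calc (m:ℝ)⁻¹ * ‖∑ i, (gradient (V i) x - gradient (V i) x')‖
      ≤ (m:ℝ)⁻¹ * ∑ i, ‖gradient (V i) x - gradient (V i) x'‖ :=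
        mul_le_mul_of_nonneg_left (norm_sum_le _ _) (by positivity)
    _ ≤ (m:ℝ)⁻¹ * ∑ _i : Fin m, L * ‖x - x'‖ :=
        mul_le_mul_of_nonneg_left (Finset.sum_le_sum fun i _ => hlip i x x') (by positivity)
    _ = L * ‖x - x'‖ := by
        rw [Finset.sum_const, Finset.card_univ, Fintype.card_fin, nsmul_eq_mul, ← mul_assoc,
          inv_mul_cancel₀ hm0.ne', one_mul]

end AnalysisAux

lemma aux_avg_norm_sq_le {m : ℕ} {E : Type*} [NormedAddCommGroup E] [NormedSpace ℝ E]
    (hm : 1 ≤ m) (v : Fin m → E) :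
    ‖(m : ℝ)⁻¹ • ∑ i, v i‖^2 ≤ (m : ℝ)⁻¹ * ∑ i, ‖v i‖^2 := by
  have hm0 : (0:ℝ) < m := by exact_mod_cast hm
  have h1 : ‖(m : ℝ)⁻¹ • ∑ i, v i‖ ≤ (m : ℝ)⁻¹ * ∑ i, ‖v i‖ := by
    rw [norm_smul, Real.norm_eq_abs, abs_of_pos (by positivity)]
    exact mul_le_mul_of_nonneg_left (norm_sum_le _ _) (by positivity)
  have h2 : ‖(m : ℝ)⁻¹ • ∑ i, v i‖^2 ≤ ((m : ℝ)⁻¹ * ∑ i, ‖v i‖)^2 :=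
    pow_le_pow_left₀ (norm_nonneg _) h1 2
  have h3 : (∑ i, ‖v i‖)^2 ≤ (m : ℝ) * ∑ i, ‖v i‖^2 := by
    have := sq_sum_le_card_mul_sum_sq (s := (Finset.univ : Finset (Fin m)))
      (f := fun i => ‖v i‖)
    simpa using this
  calc ‖(m : ℝ)⁻¹ • ∑ i, v i‖^2 ≤ ((m : ℝ)⁻¹)^2 * (∑ i, ‖v i‖)^2 := by
        rw [← mul_pow]; exact h2
    _ ≤ ((m : ℝ)⁻¹)^2 * ((m : ℝ) * ∑ i, ‖v i‖^2) :=
        mul_le_mul_of_nonneg_left h3 (by positivity)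
    _ = (m : ℝ)⁻¹ * ∑ i, ‖v i‖^2 := by field_simp

lemma aux_sq_split {a b c : ℝ} (ha : 0 ≤ a) (h : a ≤ b + c) : a^2 ≤ 2*b^2 + 2*c^2 := by
  nlinarith [sq_nonneg (b - c), sq_nonneg (b + c)]

lemma aux_arith_step (n G μ L η : ℝ) (hn : 1 ≤ n) (hμ : 0 < μ) (hμG : μ ≤ G) (hη : 0 < η)
    (hL : 0 < L) (hηle : 8 * L * η ≤ μ)
    (N2 D2 e1 e2 e3 U S ip db2 δ : ℝ)
    (hN2 : 0 ≤ N2) (hD2 : 0 ≤ D2) (he1 : 0 ≤ e1) (he2 : 0 ≤ e2) (he3 : 0 ≤ e3)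
    (hU : U ≤ 2*e2 + 4*n*e1 + 4*L^2*e3)
    (hip : 1/(2*G)*N2 + μ/(2*n)*D2 - 1/(2*μ*n)*U ≤ ip)
    (hdb : db2 ≤ 1/n*D2) (hdb0 : 0 ≤ db2)
    (hδ : η*ip - L*η^2*db2 ≤ δ)
    (hS : S ≤ 2*n*N2 + 2*L^2*e3) :
    1/n*S + G^2/n*D2 ≤ 8*G^2/(η*μ)*δ + 16*G^2/μ^2*e1 + 8*G^2/(n*μ^2)*e2
      + 18*G^2*L^2/(n*μ^2)*e3 := by
  have hG : 0 < G := lt_of_lt_of_le hμ hμG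
  have hn0 : (0:ℝ) < n := by linarith
  have h1 : 8*G^2/(η*μ)*(η*ip - L*η^2*db2) ≤ 8*G^2/(η*μ)*δ :=
    mul_le_mul_of_nonneg_left hδ (by positivity)
  have h2 : 8*G^2/(η*μ)*(η*ip - L*η^2*db2) = 8*G^2/μ*ip - 8*G^2*L*η/μ*db2 := by
    field_simp
  have h3 : 8*G^2/μ*(1/(2*G)*N2 + μ/(2*n)*D2 - 1/(2*μ*n)*U) ≤ 8*G^2/μ*ip :=
    mul_le_mul_of_nonneg_left hip (by positivity)
  have h4 : 8*G^2/μ*(1/(2*G)*N2 + μ/(2*n)*D2 - 1/(2*μ*n)*U)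
      = 4*G/μ*N2 + 4*G^2/n*D2 - 4*G^2/(μ^2*n)*U := by
    field_simp
    ring
  have h5 : 8*G^2*L*η/μ*db2 ≤ G^2*(1/n*D2) := by
    have hc : 8*G^2*L*η/μ ≤ G^2 := by
      rw [div_le_iff₀ hμ]
      linarith [mul_le_mul_of_nonneg_left hηle (sq_nonneg G)]
    exact mul_le_mul hc hdb hdb0 (by positivity)
  have h6 : 4*G^2/(μ^2*n)*U ≤ 4*G^2/(μ^2*n)*(2*e2 + 4*n*e1 + 4*L^2*e3) :=
    mul_le_mul_of_nonneg_left hU (by positivity)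
  have h7 : 4*G^2/(μ^2*n)*(2*e2 + 4*n*e1 + 4*L^2*e3)
      = 8*G^2/(n*μ^2)*e2 + 16*G^2/μ^2*e1 + 16*G^2*L^2/(n*μ^2)*e3 := by
    field_simp
    ring
  have h8 : 1/n*S ≤ 1/n*(2*n*N2 + 2*L^2*e3) := mul_le_mul_of_nonneg_left hS (by positivity)
  have h9 : 1/n*(2*n*N2 + 2*L^2*e3) = 2*N2 + 2*L^2/n*e3 := by field_simp
  have hμ2G2 : μ^2 ≤ G^2 := by
    have := pow_le_pow_left₀ hμ.le hμG 2
    linarith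
  have h10 : 2*N2 ≤ 4*G/μ*N2 := by
    have hc2 : (2:ℝ) ≤ 4*G/μ := by rw [le_div_iff₀ hμ]; linarith
    exact mul_le_mul_of_nonneg_right hc2 hN2
  have h11 : 2*L^2/n*e3 ≤ 2*G^2*L^2/(n*μ^2)*e3 := by
    have hcc : 2*L^2/n ≤ 2*G^2*L^2/(n*μ^2) := by
      rw [div_le_div_iff₀ (by positivity) (by positivity)]
      have hLL : 0 ≤ 2*L^2*n := by positivity
      linarith [mul_le_mul_of_nonneg_left hμ2G2 hLL]
    exact mul_le_mul_of_nonneg_right hcc he3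
  have h12 : 0 ≤ G^2/n*D2 := by positivity
  ring_nf at h1 h2 h3 h4 h5 h6 h7 h8 h9 h10 h11 h12 ⊢
  linarith

lemma aux_arith_stepT (n G μ L η : ℝ) (hn : 1 ≤ n) (hμ : 0 < μ) (hμG : μ ≤ G) (hη : 0 < η)
    (hL : 0 < L) (hηle : 8 * L * η ≤ μ)
    (N2 D2 e1 e2 e3 S Y2 yb2 δ : ℝ)
    (hN2 : 0 ≤ N2) (hD2 : 0 ≤ D2) (he1 : 0 ≤ e1) (he2 : 0 ≤ e2) (he3 : 0 ≤ e3)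
    (hD2y : D2 ≤ 1/μ^2 * Y2)
    (hY2 : Y2 ≤ 2*e2 + 2*n*yb2)
    (hyb : yb2 ≤ 4*e1 + 4*L^2/n*e3 + 2*N2)
    (hδ : 1/(4*L)*N2 ≤ δ)
    (hS : S ≤ 2*n*N2 + 2*L^2*e3) :
    1/n*S + G^2/n*D2 ≤ 8*G^2/(η*μ)*δ + 16*G^2/μ^2*e1 + 8*G^2/(n*μ^2)*e2
      + 18*G^2*L^2/(n*μ^2)*e3 := by
  have hG : 0 < G := lt_of_lt_of_le hμ hμG
  have hn0 : (0:ℝ) < n := by linarith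
  have hμ2G2 : μ^2 ≤ G^2 := by
    have := pow_le_pow_left₀ hμ.le hμG 2
    linarith
  have h1 : 8*G^2/(η*μ)*(1/(4*L)*N2) ≤ 8*G^2/(η*μ)*δ :=
    mul_le_mul_of_nonneg_left hδ (by positivity)
  have h2 : 8*G^2/(η*μ)*(1/(4*L)*N2) = 2*G^2/(η*μ*L)*N2 := by
    field_simp
    ring
  have h3 : 16*G^2/μ^2*N2 ≤ 2*G^2/(η*μ*L)*N2 := by
    have hc : 16*G^2/μ^2 ≤ 2*G^2/(η*μ*L) := by
      rw [div_le_div_iff₀ (by positivity) (by positivity)]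
      have h8 : 0 ≤ 2*G^2*μ := by positivity
      have := mul_le_mul_of_nonneg_left hηle h8
      linarith
    exact mul_le_mul_of_nonneg_right hc hN2
  have h4 : G^2/n*D2 ≤ G^2/n*(1/μ^2*Y2) := mul_le_mul_of_nonneg_left hD2y (by positivity)
  have h5 : G^2/n*(1/μ^2*Y2) ≤ G^2/n*(1/μ^2*(2*e2 + 2*n*(4*e1 + 4*L^2/n*e3 + 2*N2))) := by
    apply mul_le_mul_of_nonneg_left _ (by positivity)
    apply mul_le_mul_of_nonneg_left _ (by positivity)
    have := mul_le_mul_of_nonneg_left hyb (by positivity : (0:ℝ) ≤ 2*n)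
    linarith
  have h6 : G^2/n*(1/μ^2*(2*e2 + 2*n*(4*e1 + 4*L^2/n*e3 + 2*N2)))
      = 2*G^2/(n*μ^2)*e2 + 8*G^2/μ^2*e1 + 8*G^2*L^2/(n*μ^2)*e3 + 4*G^2/μ^2*N2 := by
    field_simp
    ring
  have h8 : 1/n*S ≤ 1/n*(2*n*N2 + 2*L^2*e3) := mul_le_mul_of_nonneg_left hS (by positivity)
  have h9 : 1/n*(2*n*N2 + 2*L^2*e3) = 2*N2 + 2*L^2/n*e3 := by field_simp
  have h10 : 2*N2 ≤ 2*G^2/μ^2*N2 := by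
    have hc2 : (2:ℝ) ≤ 2*G^2/μ^2 := by
      rw [le_div_iff₀ (by positivity)]
      linarith
    exact mul_le_mul_of_nonneg_right hc2 hN2
  have h11 : 2*L^2/n*e3 ≤ 2*G^2*L^2/(n*μ^2)*e3 := by
    have hcc : 2*L^2/n ≤ 2*G^2*L^2/(n*μ^2) := by
      rw [div_le_div_iff₀ (by positivity) (by positivity)]
      have hLL : 0 ≤ 2*L^2*n := by positivity
      linarith [mul_le_mul_of_nonneg_left hμ2G2 hLL]
    exact mul_le_mul_of_nonneg_right hcc he3
  have h12 : 0 ≤ G^2/μ^2*N2 := by positivity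
  have h13 : 0 ≤ G^2/μ^2*e1 := by positivity
  have h14 : 0 ≤ G^2/(n*μ^2)*e2 := by positivity
  have h15 : 0 ≤ G^2*L^2/(n*μ^2)*e3 := by positivity
  ring_nf at h1 h2 h3 h4 h5 h6 h8 h9 h10 h11 h12 h13 h14 h15 ⊢
  linarith

set_option maxHeartbeats 2000000 in
theorem stmt0
    (n p : ℕ) (hn : 1 ≤ n) (hp : 1 ≤ p)
    (L G μ η Vstar : ℝ)
    (hL : 0 < L) (hμ : 0 < μ) (hμG : μ ≤ G) (hη : 0 < η) (hηle : η ≤ μ / (8 * L))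
    (V : Fin n → EuclideanSpace ℝ (Fin p) → ℝ)
    (hdiff : ∀ i, Differentiable ℝ (V i))
    (hlip : ∀ i x x', ‖gradient (V i) x - gradient (V i) x'‖ ≤ L * ‖x - x'‖)
    (Vbar : EuclideanSpace ℝ (Fin p) → ℝ)
    (hVbar : ∀ x, Vbar x = (n : ℝ)⁻¹ * ∑ i, V i x)
    (hbdd : ∀ x, Vbar x ≤ Vstar)
    (T : ℕ)
    (θ y d : ℕ → BlockVec n p)
    (H : ℕ → Fin n → Matrix (Fin p) (Fin p) ℝ)
    (hHsymm : ∀ t ≤ T, ∀ i, (H t i).IsSymm)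
    (hHlow : ∀ t ≤ T, ∀ i, (H t i - G⁻¹ • 1).PosSemidef)
    (hHup : ∀ t ≤ T, ∀ i, ((μ⁻¹ • (1 : Matrix (Fin p) (Fin p) ℝ)) - H t i).PosSemidef)
    (hd : ∀ t ≤ T, ∀ i, d t i = WithLp.toLp 2 ((H t i).mulVec (y t i)))
    (hupd : ∀ t < T, blockAvg (θ (t + 1)) = blockAvg (θ t) + η • blockAvg (d t)) :
    (n : ℝ)⁻¹ * ∑ t ∈ Finset.range (T + 1), ∑ i, ‖gradient Vbar (θ t i)‖ ^ 2 ≤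
      8 * G ^ 2 * (Vstar - Vbar (blockAvg (θ 0))) / (η * μ)
      - G ^ 2 / n * ∑ t ∈ Finset.range (T + 1), ‖d t‖ ^ 2
      + 76 * G ^ 2 / μ ^ 2 * ∑ t ∈ Finset.range (T + 1),
          ‖((n : ℝ)⁻¹ • ∑ i, gradient (V i) (θ t i)) - blockAvg (y t)‖ ^ 2
      + 10 * G ^ 2 / (n * μ ^ 2) * ∑ t ∈ Finset.range (T + 1),
          ‖y t - consensus (blockAvg (y t))‖ ^ 2
      + 82 * G ^ 2 * L ^ 2 / (n * μ ^ 2) * ∑ t ∈ Finset.range (T + 1),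
          ‖θ t - consensus (blockAvg (θ t))‖ ^ 2 := by
  have hG : 0 < G := lt_of_lt_of_le hμ hμG
  have hn0 : (0:ℝ) < n := by exact_mod_cast hn
  have hηle' : 8 * L * η ≤ μ := by
    rw [le_div_iff₀ (by positivity)] at hηle
    linarith
  have hVbfun : Vbar = fun x => (n : ℝ)⁻¹ * ∑ i, V i x := funext hVbar
  have hVdiff : Differentiable ℝ Vbar := by
    rw [hVbfun]
    exact (Differentiable.fun_sum (fun i _ => hdiff i)).const_mul _
  have hVgrad : ∀ x, gradient Vbar x = (n : ℝ)⁻¹ • ∑ i, gradient (V i) x :=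
    aux_grad_avg n V hdiff Vbar hVbfun
  have hVlip : ∀ x x', ‖gradient Vbar x - gradient Vbar x'‖ ≤ L * ‖x - x'‖ :=
    aux_grad_avg_lip n hn L V hdiff hlip Vbar hVbfun
  -- the per-step "progress" quantity
  set δ : ℕ → ℝ :=
    fun t => (if t < T then Vbar (blockAvg (θ (t+1))) else Vstar) - Vbar (blockAvg (θ t))
    with hδdef
  -- per-step inequality
  have key : ∀ t ∈ Finset.range (T+1),
      1/(n:ℝ) * (∑ i, ‖gradient Vbar (θ t i)‖^2) + G^2/n * ‖d t‖^2
        ≤ 8*G^2/(η*μ) * δ t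
          + 16*G^2/μ^2 * ‖((n : ℝ)⁻¹ • ∑ i, gradient (V i) (θ t i)) - blockAvg (y t)‖^2
          + 8*G^2/(n*μ^2) * ‖y t - consensus (blockAvg (y t))‖^2
          + 18*G^2*L^2/(n*μ^2) * ‖θ t - consensus (blockAvg (θ t))‖^2 := by
    intro t htmem
    have ht : t ≤ T := Nat.lt_succ_iff.mp (Finset.mem_range.mp htmem)
    set θb := blockAvg (θ t) with hθb
    set yb := blockAvg (y t) with hyb
    set gr := gradient Vbar θb with hgr
    set g : EuclideanSpace ℝ (Fin p) := (n : ℝ)⁻¹ • ∑ i, gradient (V i) (θ t i) with hg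
    -- block norms
    have hDnorm : ‖d t‖^2 = ∑ i, ‖d t i‖^2 := by
      rw [PiLp.norm_sq_eq_of_L2]
    have hE2norm : ‖y t - consensus yb‖^2 = ∑ i, ‖y t i - yb‖^2 := by
      rw [PiLp.norm_sq_eq_of_L2]; rfl
    have hE3norm : ‖θ t - consensus θb‖^2 = ∑ i, ‖θ t i - θb‖^2 := by
      rw [PiLp.norm_sq_eq_of_L2]; rfl
    -- (a) gradient-average consensus error
    have hgdiff : ‖g - gr‖^2 ≤ L^2/n * ∑ i, ‖θ t i - θb‖^2 := by
      have hgr2 : gr = (n : ℝ)⁻¹ • ∑ i, gradient (V i) θb := hVgrad θb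
      have hsub : g - gr = (n : ℝ)⁻¹ • ∑ i, (gradient (V i) (θ t i) - gradient (V i) θb) := by
        rw [hg, hgr2, ← smul_sub, ← Finset.sum_sub_distrib]
      rw [hsub]
      calc ‖(n : ℝ)⁻¹ • ∑ i, (gradient (V i) (θ t i) - gradient (V i) θb)‖^2
          ≤ (n : ℝ)⁻¹ * ∑ i, ‖gradient (V i) (θ t i) - gradient (V i) θb‖^2 :=
            aux_avg_norm_sq_le hn _
        _ ≤ (n : ℝ)⁻¹ * ∑ i, L^2 * ‖θ t i - θb‖^2 := by
            apply mul_le_mul_of_nonneg_left _ (by positivity)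
            apply Finset.sum_le_sum
            intro i _
            have := pow_le_pow_left₀ (norm_nonneg _) (hlip i (θ t i) θb) 2
            calc ‖gradient (V i) (θ t i) - gradient (V i) θb‖^2
                ≤ (L * ‖θ t i - θb‖)^2 := this
              _ = L^2 * ‖θ t i - θb‖^2 := by ring
        _ = L^2/n * ∑ i, ‖θ t i - θb‖^2 := by
            rw [← Finset.mul_sum, ← mul_assoc]
            congr 1
            field_simp
    -- (b) ‖yb - gr‖² bound
    have hybgr : ‖yb - gr‖^2 ≤ 2*‖g - yb‖^2 + 2*(L^2/n * ∑ i, ‖θ t i - θb‖^2) := by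
      have htri : ‖yb - gr‖ ≤ ‖g - yb‖ + ‖g - gr‖ := by
        calc ‖yb - gr‖ = ‖(yb - g) + (g - gr)‖ := by congr 1; abel
          _ ≤ ‖yb - g‖ + ‖g - gr‖ := norm_add_le _ _
          _ = ‖g - yb‖ + ‖g - gr‖ := by rw [norm_sub_rev]
      have := aux_sq_split (norm_nonneg _) htri
      nlinarith [hgdiff, sq_nonneg ‖g - gr‖]
    -- matrix hypotheses at time t
    have hsymm := hHsymm t ht
    have hlow := hHlow t ht
    have hup := hHup t ht
    have hdti : ∀ i, (d t i : Fin p → ℝ) = (H t i) *ᵥ (y t i : Fin p → ℝ) := fun i => congrArg WithLp.ofLp (hd t ht i)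
    -- inner product lower bound, block level
    have hipi : ∀ i : Fin n,
        1/(2*G) * ‖gr‖^2 + μ/2 * ‖d t i‖^2 - 1/(2*μ) * ‖y t i - gr‖^2
          ≤ (inner ℝ gr (d t i) : ℝ) :=
      fun i => aux_matrix_step hμ hG (hsymm i) (hlow i) (hup i) gr (y t i) (d t i) (hdti i)
    have hipsum : (inner ℝ gr (blockAvg (d t)) : ℝ) = (n:ℝ)⁻¹ * ∑ i, (inner ℝ gr (d t i) : ℝ) := by
      rw [blockAvg, real_inner_smul_right, inner_sum]
    have hU3 : ∑ i, ‖y t i - gr‖^2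
        ≤ 2*(∑ i, ‖y t i - yb‖^2) + 4*n*‖g - yb‖^2
          + 4*L^2*(∑ i, ‖θ t i - θb‖^2) := by
      have hper : ∀ i : Fin n, ‖y t i - gr‖^2 ≤ 2*‖y t i - yb‖^2 + 2*‖yb - gr‖^2 := by
        intro i
        have htri : ‖y t i - gr‖ ≤ ‖y t i - yb‖ + ‖yb - gr‖ := by
          calc ‖y t i - gr‖ = ‖(y t i - yb) + (yb - gr)‖ := by congr 1; abel
            _ ≤ _ := norm_add_le _ _
        exact aux_sq_split (norm_nonneg _) htri
      calc ∑ i, ‖y t i - gr‖^2 ≤ ∑ i, (2*‖y t i - yb‖^2 + 2*‖yb - gr‖^2) :=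
            Finset.sum_le_sum fun i _ => hper i
        _ = 2*(∑ i, ‖y t i - yb‖^2) + (n:ℝ)*(2*‖yb - gr‖^2) := by
            rw [Finset.sum_add_distrib, ← Finset.mul_sum, Finset.sum_const, Finset.card_univ,
              Fintype.card_fin, nsmul_eq_mul]
        _ ≤ 2*(∑ i, ‖y t i - yb‖^2) + 4*n*‖g - yb‖^2 + 4*L^2*(∑ i, ‖θ t i - θb‖^2) := by
            have := mul_le_mul_of_nonneg_left hybgr (by positivity : (0:ℝ) ≤ (n:ℝ))
            have hLn : (n:ℝ) * (2*(L^2/n * ∑ i, ‖θ t i - θb‖^2))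
                = 2*L^2*(∑ i, ‖θ t i - θb‖^2) := by
              field_simp
            nlinarith [this]
    -- the S bound
    have hSb : ∑ i, ‖gradient Vbar (θ t i)‖^2
        ≤ 2*n*‖gr‖^2 + 2*L^2*(∑ i, ‖θ t i - θb‖^2) := by
      have hper : ∀ i : Fin n,
          ‖gradient Vbar (θ t i)‖^2 ≤ 2*‖gr‖^2 + 2*(L^2 * ‖θ t i - θb‖^2) := by
        intro i
        have htri : ‖gradient Vbar (θ t i)‖ ≤ ‖gr‖ + ‖gradient Vbar (θ t i) - gr‖ := by
          have h0 := norm_add_le gr (gradient Vbar (θ t i) - gr)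
          have h0' : gr + (gradient Vbar (θ t i) - gr) = gradient Vbar (θ t i) := by abel
          rwa [h0'] at h0
        have h1 := aux_sq_split (norm_nonneg _) htri
        have h2 : ‖gradient Vbar (θ t i) - gr‖^2 ≤ L^2 * ‖θ t i - θb‖^2 := by
          have := pow_le_pow_left₀ (norm_nonneg _) (hVlip (θ t i) θb) 2
          calc ‖gradient Vbar (θ t i) - gr‖^2 ≤ (L * ‖θ t i - θb‖)^2 := this
            _ = L^2 * ‖θ t i - θb‖^2 := by ring
        nlinarith
      calc ∑ i, ‖gradient Vbar (θ t i)‖^2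
          ≤ ∑ i, (2*‖gr‖^2 + 2*(L^2 * ‖θ t i - θb‖^2)) := Finset.sum_le_sum fun i _ => hper i
        _ = 2*n*‖gr‖^2 + 2*L^2*(∑ i, ‖θ t i - θb‖^2) := by
            rw [Finset.sum_add_distrib, Finset.sum_const, Finset.card_univ, Fintype.card_fin,
              nsmul_eq_mul]
            rw [show (∑ i, 2*(L^2 * ‖θ t i - θb‖^2)) = 2*L^2*(∑ i, ‖θ t i - θb‖^2) by
              rw [Finset.mul_sum]; exact Finset.sum_congr rfl fun i _ => by ring]
            ring
    by_cases htT : t < T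
    · -- case t < T : use the descent step
      have hip : 1/(2*G)*‖gr‖^2 + μ/(2*(n:ℝ))*(‖d t‖^2)
          - 1/(2*μ*(n:ℝ))*(∑ i, ‖y t i - gr‖^2) ≤ (inner ℝ gr (blockAvg (d t)) : ℝ) := by
        rw [hipsum, hDnorm]
        have hsum2 : ∑ i, (1/(2*G) * ‖gr‖^2 + μ/2 * ‖d t i‖^2 - 1/(2*μ) * ‖y t i - gr‖^2)
            ≤ ∑ i, (inner ℝ gr (d t i) : ℝ) := Finset.sum_le_sum fun i _ => hipi i
        have hexp : ∑ i, (1/(2*G) * ‖gr‖^2 + μ/2 * ‖d t i‖^2 - 1/(2*μ) * ‖y t i - gr‖^2)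
            = (n:ℝ)*(1/(2*G) * ‖gr‖^2) + μ/2 * (∑ i, ‖d t i‖^2)
              - 1/(2*μ) * (∑ i, ‖y t i - gr‖^2) := by
          rw [Finset.sum_sub_distrib, Finset.sum_add_distrib, Finset.sum_const,
            Finset.card_univ, Fintype.card_fin, nsmul_eq_mul, ← Finset.mul_sum, ← Finset.mul_sum]
        have := mul_le_mul_of_nonneg_left (le_trans (le_of_eq hexp.symm) hsum2)
          (by positivity : (0:ℝ) ≤ (n:ℝ)⁻¹)
        calc 1/(2*G)*‖gr‖^2 + μ/(2*(n:ℝ))*(∑ i, ‖d t i‖^2)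
              - 1/(2*μ*(n:ℝ))*(∑ i, ‖y t i - gr‖^2)
            = (n:ℝ)⁻¹ * ((n:ℝ)*(1/(2*G) * ‖gr‖^2) + μ/2 * (∑ i, ‖d t i‖^2)
              - 1/(2*μ) * (∑ i, ‖y t i - gr‖^2)) := by
              field_simp
          _ ≤ (n:ℝ)⁻¹ * ∑ i, (inner ℝ gr (d t i) : ℝ) := this
      have hdb : ‖blockAvg (d t)‖^2 ≤ 1/(n:ℝ) * ‖d t‖^2 := by
        rw [hDnorm, blockAvg, one_div]
        exact aux_avg_norm_sq_le hn _
      have hδt : η*(inner ℝ gr (blockAvg (d t)) : ℝ) - L*η^2*‖blockAvg (d t)‖^2 ≤ δ t := by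
        have hupdt := hupd t htT
        have hba : blockAvg (θ (t+1)) - θb = η • blockAvg (d t) := by
          rw [hupdt, hθb]; abel
        have hdesc := aux_descent Vbar L hL.le hVdiff hVlip θb (blockAvg (θ (t+1)))
        rw [hba, real_inner_smul_right, norm_smul, Real.norm_eq_abs, abs_of_pos hη,
          mul_pow] at hdesc
        have hδeq : δ t = Vbar (blockAvg (θ (t+1))) - Vbar θb := by
          rw [hδdef]; simp [htT, hθb]
        rw [hδeq]
        rw [← hgr] at hdesc
        linarith
      have main := aux_arith_step (n:ℝ) G μ L η (by exact_mod_cast hn) hμ hμG hη hL hηle'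
        (‖gr‖^2) (‖d t‖^2) (‖g - yb‖^2) (∑ i, ‖y t i - yb‖^2) (∑ i, ‖θ t i - θb‖^2)
        (∑ i, ‖y t i - gr‖^2) (∑ i, ‖gradient Vbar (θ t i)‖^2)
        ((inner ℝ gr (blockAvg (d t)) : ℝ)) (‖blockAvg (d t)‖^2) (δ t)
        (sq_nonneg _) (sq_nonneg _) (sq_nonneg _)
        (Finset.sum_nonneg fun i _ => sq_nonneg _) (Finset.sum_nonneg fun i _ => sq_nonneg _)
        hU3 hip hdb (sq_nonneg _) hδt hSb
      rw [hE2norm, hE3norm]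
      exact main
    · -- case t = T
      have htT' : t = T := le_antisymm ht (not_lt.mp htT)
      have hδT : 1/(4*L) * ‖gr‖^2 ≤ δ t := by
        have := aux_pl Vbar L Vstar hL hVdiff hVlip hbdd θb
        rw [hδdef]
        simp only [htT, if_false]
        rw [← hgr] at this
        linarith
      have hD2y : ‖d t‖^2 ≤ 1/μ^2 * ∑ i, ‖y t i‖^2 := by
        rw [hDnorm, Finset.mul_sum]
        apply Finset.sum_le_sum
        intro i _
        exact aux_matrix_step2 hμ hG (hsymm i) (hlow i) (hup i) (y t i) (d t i) (hdti i)
      have hY2 : ∑ i, ‖y t i‖^2 ≤ 2*(∑ i, ‖y t i - yb‖^2) + 2*(n:ℝ)*‖yb‖^2 := by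
        have hper : ∀ i : Fin n, ‖y t i‖^2 ≤ 2*‖y t i - yb‖^2 + 2*‖yb‖^2 := by
          intro i
          have htri : ‖y t i‖ ≤ ‖y t i - yb‖ + ‖yb‖ := by
            calc ‖y t i‖ = ‖(y t i - yb) + yb‖ := by congr 1; abel
              _ ≤ _ := norm_add_le _ _
          exact aux_sq_split (norm_nonneg _) htri
        calc ∑ i, ‖y t i‖^2 ≤ ∑ i, (2*‖y t i - yb‖^2 + 2*‖yb‖^2) :=
              Finset.sum_le_sum fun i _ => hper i
          _ = 2*(∑ i, ‖y t i - yb‖^2) + 2*(n:ℝ)*‖yb‖^2 := by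
              rw [Finset.sum_add_distrib, ← Finset.mul_sum, Finset.sum_const, Finset.card_univ,
                Fintype.card_fin, nsmul_eq_mul]
              ring
      have hyb2 : ‖yb‖^2 ≤ 4*‖g - yb‖^2 + 4*L^2/(n:ℝ)*(∑ i, ‖θ t i - θb‖^2) + 2*‖gr‖^2 := by
        have htri : ‖yb‖ ≤ ‖yb - gr‖ + ‖gr‖ := by
          calc ‖yb‖ = ‖(yb - gr) + gr‖ := by congr 1; abel
            _ ≤ _ := norm_add_le _ _
        have h1 := aux_sq_split (norm_nonneg _) htri
        have h2 : 4*L^2/(n:ℝ)*(∑ i, ‖θ t i - θb‖^2)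
            = 4*(L^2/n * ∑ i, ‖θ t i - θb‖^2) := by
          field_simp
        rw [h2]
        linarith [hybgr]
      have main := aux_arith_stepT (n:ℝ) G μ L η (by exact_mod_cast hn) hμ hμG hη hL hηle'
        (‖gr‖^2) (‖d t‖^2) (‖g - yb‖^2) (∑ i, ‖y t i - yb‖^2) (∑ i, ‖θ t i - θb‖^2)
        (∑ i, ‖gradient Vbar (θ t i)‖^2) (∑ i, ‖y t i‖^2) (‖yb‖^2) (δ t)
        (sq_nonneg _) (sq_nonneg _) (sq_nonneg _)
        (Finset.sum_nonneg fun i _ => sq_nonneg _) (Finset.sum_nonneg fun i _ => sq_nonneg _)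
        hD2y hY2 hyb2 hδT hSb
      rw [hE2norm, hE3norm]
      exact main
  -- telescoping sum of δ
  have hsumδ : ∑ t ∈ Finset.range (T+1), δ t = Vstar - Vbar (blockAvg (θ 0)) := by
    rw [Finset.sum_range_succ]
    have h1 : ∀ t ∈ Finset.range T, δ t = Vbar (blockAvg (θ (t+1))) - Vbar (blockAvg (θ t)) := by
      intro t htm
      rw [hδdef]
      simp [Finset.mem_range.mp htm]
    rw [Finset.sum_congr rfl h1, Finset.sum_range_sub (fun t => Vbar (blockAvg (θ t)))]
    have h2 : δ T = Vstar - Vbar (blockAvg (θ T)) := by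
      rw [hδdef]; simp
    rw [h2]
    ring
  -- sum the per-step bounds
  have total := Finset.sum_le_sum key
  have tLHS : ∑ t ∈ Finset.range (T+1),
      (1/(n:ℝ) * (∑ i, ‖gradient Vbar (θ t i)‖^2) + G^2/n * ‖d t‖^2)
      = (n : ℝ)⁻¹ * (∑ t ∈ Finset.range (T+1), ∑ i, ‖gradient Vbar (θ t i)‖^2)
        + G^2/n * ∑ t ∈ Finset.range (T+1), ‖d t‖^2 := by
    rw [Finset.sum_add_distrib]
    congr 1
    · rw [Finset.mul_sum]
      exact Finset.sum_congr rfl fun t _ => by rw [one_div]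
    · rw [Finset.mul_sum]
  have tRHS : ∑ t ∈ Finset.range (T+1),
      (8*G^2/(η*μ) * δ t
        + 16*G^2/μ^2 * ‖((n : ℝ)⁻¹ • ∑ i, gradient (V i) (θ t i)) - blockAvg (y t)‖^2
        + 8*G^2/(n*μ^2) * ‖y t - consensus (blockAvg (y t))‖^2
        + 18*G^2*L^2/(n*μ^2) * ‖θ t - consensus (blockAvg (θ t))‖^2)
      = 8*G^2/(η*μ) * (Vstar - Vbar (blockAvg (θ 0)))
        + 16*G^2/μ^2 * (∑ t ∈ Finset.range (T+1),
            ‖((n : ℝ)⁻¹ • ∑ i, gradient (V i) (θ t i)) - blockAvg (y t)‖^2)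
        + 8*G^2/(n*μ^2) * (∑ t ∈ Finset.range (T+1), ‖y t - consensus (blockAvg (y t))‖^2)
        + 18*G^2*L^2/(n*μ^2) * (∑ t ∈ Finset.range (T+1),
            ‖θ t - consensus (blockAvg (θ t))‖^2) := by
    rw [Finset.sum_add_distrib, Finset.sum_add_distrib, Finset.sum_add_distrib,
      ← Finset.mul_sum, ← Finset.mul_sum, ← Finset.mul_sum, ← Finset.mul_sum, hsumδ]
  rw [tLHS, tRHS] at total
  -- nonnegativity of error sums
  have hs1 : (0:ℝ) ≤ ∑ t ∈ Finset.range (T+1),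
      ‖((n : ℝ)⁻¹ • ∑ i, gradient (V i) (θ t i)) - blockAvg (y t)‖^2 :=
    Finset.sum_nonneg fun t _ => by positivity
  have hs2 : (0:ℝ) ≤ ∑ t ∈ Finset.range (T+1), ‖y t - consensus (blockAvg (y t))‖^2 :=
    Finset.sum_nonneg fun t _ => by positivity
  have hs3 : (0:ℝ) ≤ ∑ t ∈ Finset.range (T+1), ‖θ t - consensus (blockAvg (θ t))‖^2 :=
    Finset.sum_nonneg fun t _ => by positivity
  have hb1 : 16*G^2/μ^2 * (∑ t ∈ Finset.range (T+1),
      ‖((n : ℝ)⁻¹ • ∑ i, gradient (V i) (θ t i)) - blockAvg (y t)‖^2)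
      ≤ 76*G^2/μ^2 * (∑ t ∈ Finset.range (T+1),
      ‖((n : ℝ)⁻¹ • ∑ i, gradient (V i) (θ t i)) - blockAvg (y t)‖^2) := by
    apply mul_le_mul_of_nonneg_right _ hs1
    have h0 : (0:ℝ) ≤ G^2/μ^2 := by positivity
    ring_nf
    ring_nf at h0
    linarith
  have hb2 : 8*G^2/(n*μ^2) * (∑ t ∈ Finset.range (T+1), ‖y t - consensus (blockAvg (y t))‖^2)
      ≤ 10*G^2/(n*μ^2) * (∑ t ∈ Finset.range (T+1), ‖y t - consensus (blockAvg (y t))‖^2) := by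
    apply mul_le_mul_of_nonneg_right _ hs2
    have h0 : (0:ℝ) ≤ G^2/((n:ℝ)*μ^2) := by positivity
    ring_nf
    ring_nf at h0
    linarith
  have hb3 : 18*G^2*L^2/(n*μ^2) * (∑ t ∈ Finset.range (T+1),
      ‖θ t - consensus (blockAvg (θ t))‖^2)
      ≤ 82*G^2*L^2/(n*μ^2) * (∑ t ∈ Finset.range (T+1),
      ‖θ t - consensus (blockAvg (θ t))‖^2) := by
    apply mul_le_mul_of_nonneg_right _ hs3
    have h0 : (0:ℝ) ≤ G^2*L^2/((n:ℝ)*μ^2) := by positivity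
    ring_nf
    ring_nf at h0
    linarith
  have hfinal1 : 8*G^2/(η*μ) * (Vstar - Vbar (blockAvg (θ 0)))
      = 8 * G ^ 2 * (Vstar - Vbar (blockAvg (θ 0))) / (η * μ) := by ring
  have hlhs : (n : ℝ)⁻¹ * ∑ t ∈ Finset.range (T + 1), ∑ i, ‖gradient Vbar (θ t i)‖ ^ 2
      = ∑ t ∈ Finset.range (T+1), 1/(n:ℝ) * (∑ i, ‖gradient Vbar (θ t i)‖^2) := by
    rw [Finset.mul_sum]
    apply Finset.sum_congr rfl
    intro t _
    rw [one_div]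
  rw [hlhs] at total ⊢
  linarith [total, hb1, hb2, hb3]
end

section
/- Let n, p ≥ 1, η > 0, 0 < μ ≤ G, and let W ∈ ℝ^{n×n} be doubly stochastic with ρ := ‖W − (1/n)J_n‖ < 1. For i = 1, …, n let H_i be a real symmetric p×p matrix with (1/G) I_p ⪯ H_i ⪯ (1/μ) I_p. Let θ, y ∈ ℝ^{np} with blocks θ_i, y_i, let d ∈ ℝ^{np} be the vector with blocks d_i := H_i y_i, and set θ⁺ := (W ⊗ I_p)(θ + η d). Then ‖θ⁺ − 𝟙_n⊗θ̄⁺‖² ≤ ((1+ρ²)/2) ‖θ − 𝟙_n⊗θ̄‖² + (4η²/(μ²(1−ρ²))) ‖y − 𝟙_n⊗ȳ‖² + (G²η²/(μ²(1−ρ²))) ‖d‖², where θ̄, θ̄⁺, ȳ denote block averages. -/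
open scoped BigOperators

section AuxMatrix

open Matrix

lemma aux_psd_dot_s1 {p : ℕ} {M : Matrix (Fin p) (Fin p) ℝ} (hM : M.PosSemidef) (x : Fin p → ℝ) :
    0 ≤ (x ⬝ᵥ M.mulVec x) := by simpa using hM.dotProduct_mulVec_nonneg x

lemma aux_enorm_sq_dot {p : ℕ} (v : EuclideanSpace ℝ (Fin p)) : ‖v‖^2 = (v ⬝ᵥ v) := by
  rw [PiLp.norm_sq_eq_of_L2]
  simp [dotProduct, Real.norm_eq_abs, sq_abs, pow_two]

lemma aux_dot_eq_of_ptwise {p : ℕ} {v w : Fin p → ℝ} {v' w' : Fin p → ℝ}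
    (hv : ∀ k, v k = v' k) (hw : ∀ k, w k = w' k) : (v ⬝ᵥ w) = (v' ⬝ᵥ w') := by
  simp only [dotProduct, hv, hw]

open scoped MatrixOrder in
lemma aux_mulVec_norm_le {p : ℕ} {E : Matrix (Fin p) (Fin p) ℝ} {c : ℝ} (hc : 0 ≤ c)
    (h1 : E.PosSemidef) (h2 : (c • (1:Matrix (Fin p) (Fin p) ℝ) - E).PosSemidef)
    (x w : EuclideanSpace ℝ (Fin p)) (hw : ∀ k, w k = E.mulVec x k) :
    ‖w‖ ≤ c * ‖x‖ := by
  set S := CFC.sqrt E with hSdef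
  have hS : S * S = E := CFC.sqrt_mul_sqrt_self E (Matrix.nonneg_iff_posSemidef.mpr h1)
  have hSh : Sᴴ = S := (CFC.sqrt_nonneg E).posSemidef.isHermitian
  have hsym : Eᵀ = E := (by simpa using h1.isHermitian : E.IsSymm)
  have hsw : ∀ u : Fin p → ℝ, (x ⬝ᵥ E.mulVec u) = (E.mulVec x ⬝ᵥ u) := by
    intro u
    rw [Matrix.dotProduct_mulVec, ← Matrix.vecMul_transpose, hsym]
  have hpsd : (c • E - E * E).PosSemidef := by
    have h3 := h2.conjTranspose_mul_mul_same S
    have heq : Sᴴ * (c • (1:Matrix (Fin p) (Fin p) ℝ) - E) * S = c • E - E * E := by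
      rw [hSh, Matrix.mul_sub, Matrix.sub_mul, Matrix.mul_smul, Matrix.mul_one,
        Matrix.smul_mul, hS, ← hS]
      simp only [Matrix.mul_assoc]
    rwa [heq] at h3
  have hq := aux_psd_dot_s1 hpsd x
  have hexp : (x ⬝ᵥ (c • E - E * E).mulVec x)
      = c * (x ⬝ᵥ E.mulVec x) - ((E.mulVec x) ⬝ᵥ (E.mulVec x)) := by
    rw [Matrix.sub_mulVec, dotProduct_sub, Matrix.smul_mulVec,
      dotProduct_smul, ← Matrix.mulVec_mulVec, hsw (E.mulVec x)]
    simp [smul_eq_mul]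
  have key1 : ((E.mulVec x) ⬝ᵥ (E.mulVec x)) ≤ c * (x ⬝ᵥ E.mulVec x) := by
    rw [hexp] at hq; linarith
  have key2 : (x ⬝ᵥ E.mulVec x) ≤ c * (x ⬝ᵥ x) := by
    have hq2 := aux_psd_dot_s1 h2 x
    have heq2 : (x ⬝ᵥ (c • (1:Matrix (Fin p) (Fin p) ℝ) - E).mulVec x)
        = c * (x ⬝ᵥ x) - (x ⬝ᵥ E.mulVec x) := by
      rw [Matrix.sub_mulVec, dotProduct_sub, Matrix.smul_mulVec,
        dotProduct_smul, Matrix.one_mulVec]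
      simp [smul_eq_mul]
    rw [heq2] at hq2; linarith
  have e1 : ‖w‖^2 = ((E.mulVec x) ⬝ᵥ (E.mulVec x)) := by
    rw [aux_enorm_sq_dot w]
    exact aux_dot_eq_of_ptwise hw hw
  have e2 := aux_enorm_sq_dot x
  have hfin : ‖w‖^2 ≤ (c * ‖x‖)^2 := by
    have h5 := mul_le_mul_of_nonneg_left key2 hc
    calc ‖w‖^2 = ((E.mulVec x) ⬝ᵥ (E.mulVec x)) := e1
      _ ≤ c * (x ⬝ᵥ E.mulVec x) := key1
      _ ≤ c * (c * (x ⬝ᵥ x)) := h5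
      _ = (c * ‖x‖)^2 := by rw [← e2]; ring
  exact le_of_pow_le_pow_left₀ two_ne_zero (by positivity) hfin

lemma aux_norm_le_G_mul {p : ℕ} {Hm : Matrix (Fin p) (Fin p) ℝ} {G : ℝ} (hG : 0 < G)
    (hlow : (Hm - G⁻¹ • 1).PosSemidef) (x w : EuclideanSpace ℝ (Fin p))
    (hw : ∀ k, w k = Hm.mulVec x k) :
    ‖x‖ ≤ G * ‖w‖ := by
  have h1 : G⁻¹ * (x ⬝ᵥ x) ≤ (x ⬝ᵥ Hm.mulVec x) := by
    have hq := aux_psd_dot_s1 hlow x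
    have heq : (x ⬝ᵥ (Hm - G⁻¹ • (1:Matrix (Fin p) (Fin p) ℝ)).mulVec x)
        = (x ⬝ᵥ Hm.mulVec x) - G⁻¹ * (x ⬝ᵥ x) := by
      rw [Matrix.sub_mulVec, dotProduct_sub, Matrix.smul_mulVec,
        dotProduct_smul, Matrix.one_mulVec]
      simp [smul_eq_mul]
    rw [heq] at hq; linarith
  have h2 : (x ⬝ᵥ Hm.mulVec x) ≤ ‖x‖ * ‖w‖ := by
    have hcs := real_inner_le_norm x w
    rw [PiLp.inner_apply] at hcs
    have heq : (x ⬝ᵥ Hm.mulVec x) = (x ⬝ᵥ (w : Fin p → ℝ)) :=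
      (aux_dot_eq_of_ptwise (fun k => rfl) hw).symm
    rw [heq]
    refine le_trans (le_of_eq ?_) hcs
    simp [dotProduct, mul_comm]
  have hx2 : ‖x‖^2 = (x ⬝ᵥ x) := aux_enorm_sq_dot x
  rcases eq_or_lt_of_le (norm_nonneg x) with h0 | h0
  · rw [← h0]; positivity
  · have h3' : G⁻¹ * ‖x‖^2 ≤ ‖x‖ * ‖w‖ := by rw [hx2]; linarith
    have h4 := mul_le_mul_of_nonneg_left h3' hG.le
    rw [← mul_assoc, mul_inv_cancel₀ (ne_of_gt hG), one_mul] at h4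
    have hh : ‖x‖ * ‖x‖ ≤ ‖x‖ * (G * ‖w‖) := by
      calc ‖x‖ * ‖x‖ = ‖x‖^2 := (pow_two _).symm
        _ ≤ G * (‖x‖ * ‖w‖) := h4
        _ = ‖x‖ * (G * ‖w‖) := by ring
    exact (mul_le_mul_iff_right₀ h0).mp hh

end AuxMatrix

section AuxBlock

lemma aux_euclid_op_bound {m : ℕ} (M : Matrix (Fin m) (Fin m) ℝ) (v : EuclideanSpace ℝ (Fin m)) :
    ∑ i, (∑ j, M i j * v j)^2 ≤ specNorm M ^2 * ∑ j, (v j)^2 := by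
  have h2 : ‖Matrix.toEuclideanLin M v‖ ≤ specNorm M * ‖v‖ :=
    (LinearMap.toContinuousLinearMap (Matrix.toEuclideanLin M)).le_opNorm v
  have h3 := pow_le_pow_left₀ (norm_nonneg _) h2 2
  rw [mul_pow, PiLp.norm_sq_eq_of_L2, PiLp.norm_sq_eq_of_L2] at h3
  calc ∑ i, (∑ j, M i j * v j)^2 = ∑ i, ‖Matrix.toEuclideanLin M v i‖^2 := by
        refine Finset.sum_congr rfl fun i _ => ?_
        have he : Matrix.toEuclideanLin M v i = ∑ j, M i j * v j := rfl
        rw [he]; simp [Real.norm_eq_abs, sq_abs]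
    _ ≤ specNorm M ^2 * ∑ j, ‖v j‖^2 := h3
    _ = specNorm M ^2 * ∑ j, (v j)^2 := by simp [Real.norm_eq_abs, sq_abs]

lemma aux_kron_norm_le {n p : ℕ} (M : Matrix (Fin n) (Fin n) ℝ) (a : BlockVec n p) :
    ‖kronApply M a‖ ≤ specNorm M * ‖a‖ := by
  have hS : (0:ℝ) ≤ specNorm M := norm_nonneg _
  apply le_of_pow_le_pow_left₀ two_ne_zero (by positivity)
  rw [mul_pow, PiLp.norm_sq_eq_of_L2, PiLp.norm_sq_eq_of_L2]
  have hblock : ∀ i, ‖kronApply M a i‖^2 = ∑ k, (∑ j, M i j * a j k)^2 := by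
    intro i
    rw [PiLp.norm_sq_eq_of_L2]
    refine Finset.sum_congr rfl fun k _ => ?_
    have h1 : (kronApply M a) i k = ∑ j, M i j * a j k := by
      show (∑ j, M i j • a j).ofLp k = _
      rw [WithLp.ofLp_sum, Finset.sum_apply k Finset.univ]
      rfl
    rw [h1]; simp [Real.norm_eq_abs, sq_abs]
  have hblock2 : ∀ j, ‖a j‖^2 = ∑ k, (a j k)^2 := by
    intro j; rw [PiLp.norm_sq_eq_of_L2]; simp [Real.norm_eq_abs, sq_abs]
  calc ∑ i, ‖kronApply M a i‖^2 = ∑ i, ∑ k, (∑ j, M i j * a j k)^2 := by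
        exact Finset.sum_congr rfl fun i _ => hblock i
    _ = ∑ k : Fin p, ∑ i, (∑ j, M i j * a j k)^2 := Finset.sum_comm
    _ ≤ ∑ k : Fin p, specNorm M ^2 * ∑ j, (a j k)^2 := by
        refine Finset.sum_le_sum fun k _ => ?_
        exact aux_euclid_op_bound M (WithLp.toLp 2 (fun j => a j k))
    _ = specNorm M ^2 * ∑ j, ∑ k, (a j k)^2 := by
        rw [← Finset.mul_sum]; rw [Finset.sum_comm]
    _ = specNorm M ^2 * ∑ j, ‖a j‖^2 := by
        rw [Finset.sum_congr rfl fun j _ => (hblock2 j).symm]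

lemma aux_block_norm_le {n p : ℕ} {u w : BlockVec n p} {c : ℝ} (hc : 0 ≤ c)
    (h : ∀ i, ‖u i‖ ≤ c * ‖w i‖) : ‖u‖ ≤ c * ‖w‖ := by
  apply le_of_pow_le_pow_left₀ two_ne_zero (by positivity)
  rw [mul_pow, PiLp.norm_sq_eq_of_L2, PiLp.norm_sq_eq_of_L2, Finset.mul_sum]
  refine Finset.sum_le_sum fun i _ => ?_
  calc ‖u i‖^2 ≤ (c * ‖w i‖)^2 := pow_le_pow_left₀ (norm_nonneg _) (h i) 2
    _ = c^2 * ‖w i‖^2 := by ring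

lemma aux_proj_norm_le {n p : ℕ} (hn : (0:ℝ) < n) (a : BlockVec n p) :
    ‖a - consensus (blockAvg a)‖ ≤ ‖a‖ := by
  have hsum : ∑ i, a i = (n:ℝ) • blockAvg a := by
    rw [blockAvg, smul_smul, mul_inv_cancel₀ (ne_of_gt hn), one_smul]
  set b : BlockVec n p := a - consensus (blockAvg a) with hb
  apply le_of_pow_le_pow_left₀ two_ne_zero (norm_nonneg _)
  rw [PiLp.norm_sq_eq_of_L2, PiLp.norm_sq_eq_of_L2]
  have hcomp : ∀ i, b i = a i - blockAvg a := fun i => rfl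
  have hexp : ∀ i, ‖a i - blockAvg a‖^2
      = ‖a i‖^2 - 2 * (inner ℝ (a i) (blockAvg a) : ℝ) + ‖blockAvg a‖^2 := by
    intro i; rw [norm_sub_sq_real]
  calc ∑ i, ‖b i‖^2
      = ∑ i, (‖a i‖^2 - 2 * (inner ℝ (a i) (blockAvg a) : ℝ) + ‖blockAvg a‖^2) := by
        refine Finset.sum_congr rfl fun i _ => ?_
        rw [hcomp i, hexp i]
    _ = ∑ i, ‖a i‖^2 - 2 * (inner ℝ (∑ i, a i) (blockAvg a) : ℝ)
        + (n:ℝ) * ‖blockAvg a‖^2 := by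
        rw [Finset.sum_add_distrib, Finset.sum_sub_distrib, ← Finset.mul_sum, sum_inner]
        simp [Finset.card_univ]
    _ = ∑ i, ‖a i‖^2 - (n:ℝ) * ‖blockAvg a‖^2 := by
        rw [hsum, real_inner_smul_left, real_inner_self_eq_norm_sq]
        ring
    _ ≤ ∑ i, ‖a i‖^2 := by
        have : (0:ℝ) ≤ (n:ℝ) * ‖blockAvg a‖^2 := by positivity
        linarith

end AuxBlock

section AuxStruct

variable {n p : ℕ}

lemma aux_blockAvg_kron (W : Matrix (Fin n) (Fin n) ℝ) (hcol : ∀ j, ∑ i, W i j = 1)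
    (a : BlockVec n p) :
    blockAvg (kronApply W a) = blockAvg a := by
  unfold blockAvg kronApply
  congr 1
  calc ∑ i, ∑ j, W i j • a j = ∑ j, ∑ i, W i j • a j := Finset.sum_comm
    _ = ∑ j, (∑ i, W i j) • a j := by
        refine Finset.sum_congr rfl fun j _ => ?_
        rw [Finset.sum_smul]
    _ = ∑ j, a j := by
        refine Finset.sum_congr rfl fun j _ => ?_
        rw [hcol j, one_smul]

lemma aux_kron_centered (hn : 0 < n) (W : Matrix (Fin n) (Fin n) ℝ)
    (hrow : ∀ i, ∑ j, W i j = 1)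
    (a : BlockVec n p) (x : EuclideanSpace ℝ (Fin p)) :
    kronApply (W - (n : ℝ)⁻¹ • onesMat n) (a - consensus x)
      = kronApply W a - consensus (blockAvg a) := by
  refine PiLp.ext fun i => ?_
  show ∑ j, (W - (n : ℝ)⁻¹ • onesMat n) i j • (a j - x) = (∑ j, W i j • a j) - blockAvg a
  have hent : ∀ j, (W - (n : ℝ)⁻¹ • onesMat n) i j = W i j - (n:ℝ)⁻¹ := by
    intro j; simp [onesMat, Matrix.sub_apply]
  have hnn : ((n:ℝ)) ≠ 0 := by positivity
  calc ∑ j, (W - (n : ℝ)⁻¹ • onesMat n) i j • (a j - x)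
      = ∑ j, ((W i j • a j - (n:ℝ)⁻¹ • a j) - (W i j - (n:ℝ)⁻¹) • x) := by
        refine Finset.sum_congr rfl fun j _ => ?_
        rw [hent j, sub_smul, smul_sub, smul_sub, sub_smul]
        abel
    _ = (∑ j, W i j • a j) - (n:ℝ)⁻¹ • ∑ j, a j - (∑ j, (W i j - (n:ℝ)⁻¹)) • x := by
        rw [Finset.sum_sub_distrib, Finset.sum_sub_distrib, Finset.smul_sum, Finset.sum_smul]
    _ = (∑ j, W i j • a j) - blockAvg a := by
        have hz : (∑ j, (W i j - (n:ℝ)⁻¹)) = 0 := by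
          rw [Finset.sum_sub_distrib, hrow i]
          simp [Finset.card_univ, mul_inv_cancel₀ hnn]
        rw [hz, zero_smul, blockAvg]
        abel

lemma aux_kron_add (W : Matrix (Fin n) (Fin n) ℝ) (a b : BlockVec n p) :
    kronApply W (a + b) = kronApply W a + kronApply W b := by
  refine PiLp.ext fun i => ?_
  show ∑ j, W i j • (a j + b j) = (∑ j, W i j • a j) + ∑ j, W i j • b j
  rw [← Finset.sum_add_distrib]
  refine Finset.sum_congr rfl fun j _ => ?_
  rw [smul_add]

lemma aux_kron_smul (W : Matrix (Fin n) (Fin n) ℝ) (c : ℝ) (a : BlockVec n p) :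
    kronApply W (c • a) = c • kronApply W a := by
  refine PiLp.ext fun i => ?_
  show ∑ j, W i j • (c • a j) = c • ∑ j, W i j • a j
  rw [Finset.smul_sum]
  refine Finset.sum_congr rfl fun j _ => ?_
  rw [smul_smul, smul_smul, mul_comm]

lemma aux_blockAvg_add (a b : BlockVec n p) :
    blockAvg (a + b) = blockAvg a + blockAvg b := by
  unfold blockAvg
  rw [← smul_add, ← Finset.sum_add_distrib]
  congr 1

lemma aux_blockAvg_smul (c : ℝ) (a : BlockVec n p) :
    blockAvg (c • a) = c • blockAvg a := by
  unfold blockAvg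
  have h : ∑ i, (c • a) i = c • ∑ i, a i := by
    rw [Finset.smul_sum]
    rfl
  rw [h, smul_comm]

end AuxStruct

lemma aux_scalar_key (ρ a b X D η μ G : ℝ) (hρ0 : 0 ≤ ρ) (hρ : ρ < 1)
    (ha : 0 ≤ a) (hb : 0 ≤ b) (hX : 0 ≤ X) (hD : 0 ≤ D) (hη : 0 ≤ η)
    (hμ : 0 < μ) (hμG : μ ≤ G) (h1 : b ≤ D) (h2 : μ * b ≤ X + (G - μ) * D) :
    (ρ * a + η * (ρ * b))^2
      ≤ (1 + ρ^2)/2 * a^2 + 4*η^2/(μ^2*(1-ρ^2)) * X^2 + G^2*η^2/(μ^2*(1-ρ^2)) * D^2 := by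
  have h1ρ : 0 < 1 - ρ^2 := by nlinarith
  have hG : 0 < G := lt_of_lt_of_le hμ hμG
  have step1 : (ρ * a + η * (ρ * b))^2 ≤ (1 + ρ^2)/2 * a^2 + 2*η^2/(1-ρ^2) * b^2 := by
    have e : (1 + ρ^2)/2 * a^2 + 2*η^2/(1-ρ^2) * b^2 - (ρ * a + η * (ρ * b))^2
        = ((1-ρ^2)*(1+ρ^2)*a^2 + 4*η^2*b^2 - 2*(1-ρ^2)*(ρ*a + η*(ρ*b))^2) / (2*(1-ρ^2)) := by
      field_simp
      ring
    have hnum : 0 ≤ (1-ρ^2)*(1+ρ^2)*a^2 + 4*η^2*b^2 - 2*(1-ρ^2)*(ρ*a + η*(ρ*b))^2 := by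
      nlinarith [sq_nonneg ((1-ρ^2)*a - 2*ρ^2*(η*b)), sq_nonneg (η*b), sq_nonneg ρ,
        mul_nonneg (mul_nonneg h1ρ.le (by positivity : (0:ℝ) ≤ ρ^2 + 2)) (sq_nonneg (η*b))]
    have h' : 0 ≤ (1 + ρ^2)/2 * a^2 + 2*η^2/(1-ρ^2) * b^2 - (ρ * a + η * (ρ * b))^2 := by
      rw [e]; exact div_nonneg hnum (by positivity)
    linarith
  have hcore : 2*μ^2*b^2 ≤ 4*X^2 + G^2*D^2 := by
    rcases le_total G (2*μ) with hc | hc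
    · have hgd : (0:ℝ) ≤ (G-μ)*D := mul_nonneg (by linarith) hD
      have hsq := mul_le_mul h2 h2 (by positivity) (by linarith : (0:ℝ) ≤ X + (G-μ)*D)
      nlinarith [sq_nonneg (X - (G-μ)*D),
        mul_nonneg (mul_nonneg (sub_nonneg.2 hc) (by linarith : (0:ℝ) ≤ 3*G - 2*μ)) (sq_nonneg D)]
    · have hsq := mul_le_mul h1 h1 hb hD
      nlinarith [sq_nonneg X,
        mul_nonneg (mul_nonneg (sub_nonneg.2 hc) (by linarith : (0:ℝ) ≤ G + 2*μ)) (sq_nonneg D),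
        sq_nonneg b]
  have step2 : 2*η^2/(1-ρ^2) * b^2 ≤ 4*η^2/(μ^2*(1-ρ^2)) * X^2 + G^2*η^2/(μ^2*(1-ρ^2)) * D^2 := by
    have e2 : 4*η^2/(μ^2*(1-ρ^2)) * X^2 + G^2*η^2/(μ^2*(1-ρ^2)) * D^2 - 2*η^2/(1-ρ^2) * b^2
        = η^2 * (4*X^2 + G^2*D^2 - 2*μ^2*b^2) / (μ^2*(1-ρ^2)) := by
      field_simp
    have h'' : 0 ≤ 4*η^2/(μ^2*(1-ρ^2)) * X^2 + G^2*η^2/(μ^2*(1-ρ^2)) * D^2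
        - 2*η^2/(1-ρ^2) * b^2 := by
      rw [e2]
      apply div_nonneg _ (by positivity)
      apply mul_nonneg (sq_nonneg η)
      linarith
    linarith
  linarith

theorem stmt1
    (n p : ℕ) (hn : 1 ≤ n) (hp : 1 ≤ p)
    (η G μ : ℝ) (hη : 0 < η) (hμ : 0 < μ) (hμG : μ ≤ G)
    (W : Matrix (Fin n) (Fin n) ℝ)
    (hWrow : W.mulVec (fun _ => (1 : ℝ)) = fun _ => 1)
    (hWcol : Matrix.vecMul (fun _ => (1 : ℝ)) W = fun _ => 1)
    (ρ : ℝ) (hρdef : ρ = specNorm (W - (n : ℝ)⁻¹ • onesMat n)) (hρ : ρ < 1)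
    (H : Fin n → Matrix (Fin p) (Fin p) ℝ)
    (hHsymm : ∀ i, (H i).IsSymm)
    (hHlow : ∀ i, (H i - G⁻¹ • 1).PosSemidef)
    (hHup : ∀ i, ((μ⁻¹ • (1 : Matrix (Fin p) (Fin p) ℝ)) - H i).PosSemidef)
    (θ y d θplus : BlockVec n p)
    (hd : ∀ i, d i = (H i).mulVec (y i))
    (hθp : θplus = kronApply W (θ + η • d)) :
    ‖θplus - consensus (blockAvg θplus)‖ ^ 2 ≤
      (1 + ρ ^ 2) / 2 * ‖θ - consensus (blockAvg θ)‖ ^ 2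
      + 4 * η ^ 2 / (μ ^ 2 * (1 - ρ ^ 2)) * ‖y - consensus (blockAvg y)‖ ^ 2
      + G ^ 2 * η ^ 2 / (μ ^ 2 * (1 - ρ ^ 2)) * ‖d‖ ^ 2 := by
  have hn0 : (0:ℝ) < n := by exact_mod_cast hn
  have hnn : 0 < n := hn
  have hG : 0 < G := lt_of_lt_of_le hμ hμG
  have hρ0 : 0 ≤ ρ := hρdef ▸ norm_nonneg _
  have hrow : ∀ i, ∑ j, W i j = 1 := by
    intro i
    have := congrFun hWrow i
    simpa [Matrix.mulVec, dotProduct] using this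
  have hcol : ∀ j, ∑ i, W i j = 1 := by
    intro j
    have := congrFun hWcol j
    simpa [Matrix.vecMul, dotProduct] using this
  set P : Matrix (Fin n) (Fin n) ℝ := W - (n : ℝ)⁻¹ • onesMat n with hP
  set u : BlockVec n p := θ - consensus (blockAvg θ) with hu
  set v : BlockVec n p := d - consensus (blockAvg d) with hv
  set w : BlockVec n p := y - consensus (blockAvg y) with hw
  set s : BlockVec n p := θ + η • d with hs
  -- structural identity
  have hmain : θplus - consensus (blockAvg θplus) = kronApply P u + η • kronApply P v := by
    have h1 : θplus - consensus (blockAvg θplus)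
        = kronApply P (s - consensus (blockAvg s)) := by
      rw [hθp, aux_blockAvg_kron W hcol s, aux_kron_centered hnn W hrow s (blockAvg s)]
    have h2 : s - consensus (blockAvg s) = u + η • v := by
      rw [hs, hu, hv]
      refine PiLp.ext fun i => ?_
      show (θ i + η • d i) - blockAvg (θ + η • d)
          = (θ i - blockAvg θ) + η • (d i - blockAvg d)
      rw [aux_blockAvg_add, aux_blockAvg_smul, smul_sub]
      abel
    rw [h1, h2, aux_kron_add, aux_kron_smul]
  -- norm bound on the update
  have hnormθp : ‖θplus - consensus (blockAvg θplus)‖ ≤ ρ * ‖u‖ + η * (ρ * ‖v‖) := by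
    rw [hmain]
    calc ‖kronApply P u + η • kronApply P v‖
        ≤ ‖kronApply P u‖ + ‖η • kronApply P v‖ := norm_add_le _ _
      _ = ‖kronApply P u‖ + η * ‖kronApply P v‖ := by
          rw [norm_smul, Real.norm_eq_abs, abs_of_pos hη]
      _ ≤ ρ * ‖u‖ + η * (ρ * ‖v‖) := by
          have k1 := aux_kron_norm_le P u
          have k2 := aux_kron_norm_le P v
          rw [hρdef]
          exact add_le_add k1 (mul_le_mul_of_nonneg_left k2 hη.le)
  -- bound B : ‖v‖ ≤ ‖d‖
  have hBb : ‖v‖ ≤ ‖d‖ := aux_proj_norm_le hn0 d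
  -- the error vector e
  set e : BlockVec n p := WithLp.toLp 2 (fun i => WithLp.toLp 2 ((μ⁻¹ • (1 : Matrix (Fin p) (Fin p) ℝ) - H i).mulVec (y i)))
    with he
  have hsplit_d : d = μ⁻¹ • y - e := by
    refine PiLp.ext fun i => ?_
    refine PiLp.ext fun k => ?_
    show d i k = μ⁻¹ * y i k - e i k
    have h1 : d i k = ((H i).mulVec (y i)) k := congrFun (hd i) k
    have h2 : e i k = ((μ⁻¹ • (1 : Matrix (Fin p) (Fin p) ℝ) - H i).mulVec (y i)) k := rfl
    rw [h1, h2, Matrix.sub_mulVec, Matrix.smul_mulVec, Matrix.one_mulVec]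
    show _ = μ⁻¹ * y i k - (μ⁻¹ * y i k - ((H i).mulVec (y i)) k)
    ring
  have hPd : v = μ⁻¹ • w - (e - consensus (blockAvg e)) := by
    rw [hv, hw, hsplit_d]
    refine PiLp.ext fun i => ?_
    show (μ⁻¹ • y i - e i) - blockAvg (μ⁻¹ • y - e)
        = μ⁻¹ • (y i - blockAvg y) - (e i - blockAvg e)
    have hba : blockAvg (μ⁻¹ • y - e) = μ⁻¹ • blockAvg y - blockAvg e := by
      have : (μ⁻¹ • y - e : BlockVec n p) = μ⁻¹ • y + (-1 : ℝ) • e := by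
        refine PiLp.ext fun j => ?_
        show μ⁻¹ • y j - e j = μ⁻¹ • y j + (-1 : ℝ) • e j
        rw [neg_one_smul]
        abel
      rw [this, aux_blockAvg_add, aux_blockAvg_smul, aux_blockAvg_smul, neg_one_smul]
      abel
    rw [hba, smul_sub]
    abel
  have hey : ‖e‖ ≤ (μ⁻¹ - G⁻¹) * ‖y‖ := by
    have hc : (0:ℝ) ≤ μ⁻¹ - G⁻¹ := by
      have h' : G⁻¹ ≤ μ⁻¹ := by
        apply inv_anti₀ hμ hμG
      linarith
    apply aux_block_norm_le hc
    intro i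
    apply aux_mulVec_norm_le hc (hHup i) _ (y i) (e i) (fun k => rfl)
    have : ((μ⁻¹ - G⁻¹) • (1 : Matrix (Fin p) (Fin p) ℝ))
        - (μ⁻¹ • (1 : Matrix (Fin p) (Fin p) ℝ) - H i) = H i - G⁻¹ • 1 := by
      rw [sub_smul]
      abel
    rw [this]
    exact hHlow i
  have hyd : ‖y‖ ≤ G * ‖d‖ := by
    apply aux_block_norm_le hG.le
    intro i
    exact aux_norm_le_G_mul hG (hHlow i) (y i) (d i) (fun k => congrFun (hd i) k)
  have hAb : μ * ‖v‖ ≤ ‖w‖ + (G - μ) * ‖d‖ := by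
    have h1 : ‖v‖ ≤ μ⁻¹ * ‖w‖ + (μ⁻¹ - G⁻¹) * (G * ‖d‖) := by
      rw [hPd]
      calc ‖μ⁻¹ • w - (e - consensus (blockAvg e))‖
          ≤ ‖μ⁻¹ • w‖ + ‖e - consensus (blockAvg e)‖ := norm_sub_le _ _
        _ = μ⁻¹ * ‖w‖ + ‖e - consensus (blockAvg e)‖ := by
            rw [norm_smul, Real.norm_eq_abs, abs_of_pos (by positivity : (0:ℝ) < μ⁻¹)]
        _ ≤ μ⁻¹ * ‖w‖ + ‖e‖ := by
            have := aux_proj_norm_le hn0 e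
            linarith
        _ ≤ μ⁻¹ * ‖w‖ + (μ⁻¹ - G⁻¹) * ‖y‖ := by linarith [hey]
        _ ≤ μ⁻¹ * ‖w‖ + (μ⁻¹ - G⁻¹) * (G * ‖d‖) := by
            have hc : (0:ℝ) ≤ μ⁻¹ - G⁻¹ := by
              have h' : G⁻¹ ≤ μ⁻¹ := by
                apply inv_anti₀ hμ hμG
              linarith
            have := mul_le_mul_of_nonneg_left hyd hc
            linarith
    have h2 := mul_le_mul_of_nonneg_left h1 hμ.le
    calc μ * ‖v‖ ≤ μ * (μ⁻¹ * ‖w‖ + (μ⁻¹ - G⁻¹) * (G * ‖d‖)) := h2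
      _ = ‖w‖ + (G - μ) * ‖d‖ := by
          field_simp
  -- final computation
  have hkey := aux_scalar_key ρ ‖u‖ ‖v‖ ‖w‖ ‖d‖ η μ G hρ0 hρ (norm_nonneg u) (norm_nonneg v)
    (norm_nonneg w) (norm_nonneg d) hη.le hμ hμG hBb hAb
  calc ‖θplus - consensus (blockAvg θplus)‖ ^ 2
      ≤ (ρ * ‖u‖ + η * (ρ * ‖v‖))^2 := by
        apply pow_le_pow_left₀ (norm_nonneg _) hnormθp
    _ ≤ (1 + ρ ^ 2) / 2 * ‖u‖ ^ 2 + 4 * η ^ 2 / (μ ^ 2 * (1 - ρ ^ 2)) * ‖w‖ ^ 2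
        + G ^ 2 * η ^ 2 / (μ ^ 2 * (1 - ρ ^ 2)) * ‖d‖ ^ 2 := hkey
end

section
/- Let n, p ≥ 1 and let W ∈ ℝ^{n×n} be doubly stochastic with ρ := ‖W − (1/n)J_n‖ < 1. Let y, v, v' ∈ ℝ^{np} and set y⁺ := (W ⊗ I_p)(y + v − v'). Then ‖y⁺ − 𝟙_n⊗ȳ⁺‖² ≤ ((1+ρ²)/2) ‖y − 𝟙_n⊗ȳ‖² + ((1+ρ²)ρ²/(1−ρ²)) ‖v − v'‖², where ȳ and ȳ⁺ denote the block averages of y and y⁺. -/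
open scoped BigOperators

lemma toEL_apply {n : ℕ} (M : Matrix (Fin n) (Fin n) ℝ) (x : EuclideanSpace ℝ (Fin n)) (i : Fin n) :
    Matrix.toEuclideanLin M x i = ∑ j, M i j * x j := by
  simp [Matrix.toEuclideanLin, Matrix.mulVec, dotProduct, WithLp.equiv]

lemma euc_norm_sq {m : ℕ} (z : EuclideanSpace ℝ (Fin m)) : ‖z‖ ^ 2 = ∑ k, z k ^ 2 := by
  rw [EuclideanSpace.norm_eq, Real.sq_sqrt (by positivity)]
  congr 1; funext k; rw [Real.norm_eq_abs, sq_abs]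

lemma block_norm_sq {n p : ℕ} (a : BlockVec n p) : ‖a‖ ^ 2 = ∑ i, ∑ k, a i k ^ 2 := by
  rw [PiLp.norm_sq_eq_of_L2]
  exact Finset.sum_congr rfl fun i _ => euc_norm_sq (a i)

lemma kron_apply_apply {n p : ℕ} (M : Matrix (Fin n) (Fin n) ℝ) (a : BlockVec n p)
    (i : Fin n) (k : Fin p) : kronApply M a i k = ∑ j, M i j * a j k := by
  show (∑ j, M i j • a j) k = _
  rw [WithLp.ofLp_sum, Finset.sum_apply k Finset.univ fun j => (M i j • a j).ofLp]
  rfl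

lemma kron_norm_sq_le {n p : ℕ} (M : Matrix (Fin n) (Fin n) ℝ) (a : BlockVec n p) :
    ‖kronApply M a‖ ^ 2 ≤ specNorm M ^ 2 * ‖a‖ ^ 2 := by
  have hL : ∀ x : EuclideanSpace ℝ (Fin n),
      ‖Matrix.toEuclideanLin M x‖ ^ 2 ≤ specNorm M ^ 2 * ‖x‖ ^ 2 := by
    intro x
    have h2 : ‖Matrix.toEuclideanLin M x‖ ≤ specNorm M * ‖x‖ :=
      (LinearMap.toContinuousLinearMap (Matrix.toEuclideanLin M)).le_opNorm x
    calc ‖Matrix.toEuclideanLin M x‖ ^ 2 ≤ (specNorm M * ‖x‖) ^ 2 :=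
          pow_le_pow_left₀ (norm_nonneg _) h2 2
      _ = specNorm M ^ 2 * ‖x‖ ^ 2 := by ring
  let xk : Fin p → EuclideanSpace ℝ (Fin n) := fun k => WithLp.toLp 2 (fun j => a j k)
  have lhs : ‖kronApply M a‖ ^ 2 = ∑ k, ‖Matrix.toEuclideanLin M (xk k)‖ ^ 2 := by
    rw [block_norm_sq, Finset.sum_comm]
    refine Finset.sum_congr rfl fun k _ => ?_
    rw [euc_norm_sq]
    exact Finset.sum_congr rfl fun i _ => by rw [kron_apply_apply, toEL_apply]
  have rhs : ‖a‖ ^ 2 = ∑ k, ‖xk k‖ ^ 2 := by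
    rw [block_norm_sq, Finset.sum_comm]
    exact Finset.sum_congr rfl fun k _ => (euc_norm_sq (xk k)).symm
  rw [lhs, rhs, Finset.mul_sum]
  exact Finset.sum_le_sum fun k _ => hL (xk k)

section
variable {n p : ℕ}

lemma kron_sub_right (M : Matrix (Fin n) (Fin n) ℝ) (a b : BlockVec n p) :
    kronApply M (a - b) = kronApply M a - kronApply M b := by
  refine PiLp.ext fun i => ?_
  show ∑ j, M i j • (a - b) j = (∑ j, M i j • a j) - ∑ j, M i j • b j
  rw [← Finset.sum_sub_distrib]
  exact Finset.sum_congr rfl fun j _ => by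
    show M i j • (a j - b j) = _
    rw [smul_sub]

lemma kron_sub_left (M N : Matrix (Fin n) (Fin n) ℝ) (a : BlockVec n p) :
    kronApply (M - N) a = kronApply M a - kronApply N a := by
  refine PiLp.ext fun i => ?_
  show ∑ j, (M - N) i j • a j = (∑ j, M i j • a j) - ∑ j, N i j • a j
  rw [← Finset.sum_sub_distrib]
  exact Finset.sum_congr rfl fun j _ => by
    show (M i j - N i j) • a j = _
    rw [sub_smul]

lemma kron_smul_ones (a : BlockVec n p) :
    kronApply ((n : ℝ)⁻¹ • onesMat n) a = consensus (blockAvg a) := by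
  refine PiLp.ext fun i => ?_
  show ∑ j, ((n : ℝ)⁻¹ • onesMat n) i j • a j = (n : ℝ)⁻¹ • ∑ j, a j
  rw [Finset.smul_sum]
  exact Finset.sum_congr rfl fun j _ => by
    show ((n:ℝ)⁻¹ * 1) • a j = _
    rw [mul_one]

lemma kron_consensus (W : Matrix (Fin n) (Fin n) ℝ)
    (hWrow : W.mulVec (fun _ => (1 : ℝ)) = fun _ => 1) (x : EuclideanSpace ℝ (Fin p)) :
    kronApply W (consensus x) = consensus x := by
  refine PiLp.ext fun i => ?_
  show ∑ j, W i j • x = x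
  rw [← Finset.sum_smul]
  have : ∑ j, W i j = 1 := by
    have := congrFun hWrow i
    simpa [Matrix.mulVec, dotProduct] using this
  rw [this, one_smul]

lemma blockAvg_kron (W : Matrix (Fin n) (Fin n) ℝ)
    (hWcol : Matrix.vecMul (fun _ => (1 : ℝ)) W = fun _ => 1) (a : BlockVec n p) :
    blockAvg (kronApply W a) = blockAvg a := by
  unfold blockAvg
  congr 1
  show ∑ i, ∑ j, W i j • a j = ∑ i, a i
  rw [Finset.sum_comm]
  exact Finset.sum_congr rfl fun j _ => by
    rw [← Finset.sum_smul]
    have : ∑ i, W i j = 1 := by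
      have := congrFun hWcol j
      simpa [Matrix.vecMul, dotProduct] using this
    rw [this, one_smul]

lemma blockAvg_consensus (hn : 1 ≤ n) (x : EuclideanSpace ℝ (Fin p)) :
    blockAvg (consensus x : BlockVec n p) = x := by
  unfold blockAvg consensus
  rw [Finset.sum_const, Finset.card_univ, Fintype.card_fin,
    ← Nat.cast_smul_eq_nsmul ℝ, smul_smul,
    inv_mul_cancel₀ (by exact_mod_cast (by omega : n ≠ 0) : (n:ℝ) ≠ 0), one_smul]

lemma blockAvg_sub (a b : BlockVec n p) : blockAvg (a - b) = blockAvg a - blockAvg b := by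
  unfold blockAvg
  rw [← smul_sub, ← Finset.sum_sub_distrib]
  rfl

lemma consensus_sub (x z : EuclideanSpace ℝ (Fin p)) :
    (consensus (x - z) : BlockVec n p) = consensus x - consensus z := rfl

end

theorem stmt3
    (n p : ℕ) (hn : 1 ≤ n) (hp : 1 ≤ p)
    (W : Matrix (Fin n) (Fin n) ℝ)
    (hWrow : W.mulVec (fun _ => (1 : ℝ)) = fun _ => 1)
    (hWcol : Matrix.vecMul (fun _ => (1 : ℝ)) W = fun _ => 1)
    (ρ : ℝ) (hρdef : ρ = specNorm (W - (n : ℝ)⁻¹ • onesMat n)) (hρ : ρ < 1)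
    (y v v' yplus : BlockVec n p)
    (hyp : yplus = kronApply W (y + v - v')) :
    ‖yplus - consensus (blockAvg yplus)‖ ^ 2 ≤
      (1 + ρ ^ 2) / 2 * ‖y - consensus (blockAvg y)‖ ^ 2
      + (1 + ρ ^ 2) * ρ ^ 2 / (1 - ρ ^ 2) * ‖v - v'‖ ^ 2 := by
  set u : BlockVec n p := y - consensus (blockAvg y) with hu
  set w : BlockVec n p := v - v' with hw
  set s : BlockVec n p := y + v - v' with hs
  set M : Matrix (Fin n) (Fin n) ℝ := W - (n : ℝ)⁻¹ • onesMat n with hM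
  have huw : u + w = s - consensus (blockAvg y) := by
    rw [hu, hw, hs]; abel
  have havg : blockAvg yplus = blockAvg s := by
    rw [hyp]; exact blockAvg_kron W hWcol s
  have key : yplus - consensus (blockAvg yplus) = kronApply M (u + w) := by
    rw [hM, kron_sub_left, kron_smul_ones, huw, kron_sub_right,
      kron_consensus W hWrow, blockAvg_sub, blockAvg_consensus hn,
      consensus_sub, havg, hyp]
    abel
  have hbound : ‖yplus - consensus (blockAvg yplus)‖ ^ 2 ≤ ρ ^ 2 * ‖u + w‖ ^ 2 := by
    rw [key, hρdef]
    exact kron_norm_sq_le M (u + w)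
  have hρ0 : 0 ≤ ρ := hρdef ▸ norm_nonneg _
  have htri : ‖u + w‖ ≤ ‖u‖ + ‖w‖ := norm_add_le u w
  have hsq : ‖u + w‖ ^ 2 ≤ (‖u‖ + ‖w‖) ^ 2 :=
    pow_le_pow_left₀ (norm_nonneg _) htri 2
  have h2 : ‖yplus - consensus (blockAvg yplus)‖ ^ 2 ≤ ρ ^ 2 * (‖u‖ + ‖w‖) ^ 2 :=
    hbound.trans (mul_le_mul_of_nonneg_left hsq (sq_nonneg ρ))
  set a : ℝ := ‖u‖
  set b : ℝ := ‖w‖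
  have hc1 : ρ ^ 2 < 1 := by nlinarith
  have hpos : (0:ℝ) < 1 - ρ ^ 2 := by linarith
  have hident : (1 + ρ ^ 2) / 2 * a ^ 2 + (1 + ρ ^ 2) * ρ ^ 2 / (1 - ρ ^ 2) * b ^ 2
      - ρ ^ 2 * (a + b) ^ 2
      = ((1 - ρ ^ 2) * a - 2 * ρ ^ 2 * b) ^ 2 / (2 * (1 - ρ ^ 2)) := by
    field_simp
    ring
  have hnn : 0 ≤ ((1 - ρ ^ 2) * a - 2 * ρ ^ 2 * b) ^ 2 / (2 * (1 - ρ ^ 2)) :=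
    div_nonneg (sq_nonneg _) (by linarith)
  linarith
end

section
/- Let (Ω, ℱ, ℙ) be a probability space and n, p, B ≥ 1. For each i = 1, …, n let X_{i,1}, …, X_{i,B} : Ω → ℝ^p be independent square-integrable random vectors, each with mean g_i ∈ ℝ^p (i.e., 𝔼[X_{i,b}] = g_i for all b) and 𝔼‖X_{i,b} − g_i‖² ≤ ν_i² for all b. Let v : Ω → ℝ^{np} be the random vector with blocks v_i := (1/B) ∑_{b=1}^B X_{i,b}, let W ∈ ℝ^{n×n} be doubly stochastic with ρ := ‖W − (1/n)J_n‖, and set y := (W ⊗ I_p) v. Then 𝔼‖y − 𝟙_n⊗ȳ‖² ≤ (ρ²/B) ∑_{i=1}^n ν_i² + ρ² ∑_{i=1}^n ‖g_i‖², where ȳ denotes the block average of y. -/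
open scoped BigOperators

lemma toEuclideanLin_le {n m : ℕ} (M : Matrix (Fin n) (Fin m) ℝ) (x : EuclideanSpace ℝ (Fin m)) :
    ‖Matrix.toEuclideanLin M x‖ ≤ specNorm M * ‖x‖ := by
  have := (LinearMap.toContinuousLinearMap (Matrix.toEuclideanLin M)).le_opNorm x
  simpa [specNorm] using this

lemma euclid_sum_apply {p : ℕ} {ι : Type*} (s : Finset ι) (u : ι → EuclideanSpace ℝ (Fin p))
    (k : Fin p) : (∑ b ∈ s, u b) k = ∑ b ∈ s, u b k := by
  exact map_sum (EuclideanSpace.proj (𝕜 := ℝ) k) u s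

lemma blockNormSq {n p : ℕ} (a : BlockVec n p) : ‖a‖^2 = ∑ i, ∑ k, (a i k)^2 := by
  rw [PiLp.norm_sq_eq_of_L2]
  refine Finset.sum_congr rfl fun i _ => ?_
  rw [PiLp.norm_sq_eq_of_L2]
  exact Finset.sum_congr rfl fun k _ => by simp [Real.norm_eq_abs, sq_abs]

lemma kron_sq_bound {n p : ℕ} (M : Matrix (Fin n) (Fin n) ℝ) (a : BlockVec n p) :
    ‖kronApply M a‖^2 ≤ specNorm M ^ 2 * ‖a‖^2 := by
  rw [blockNormSq, blockNormSq]
  have hcomp : ∀ (i : Fin n) (k : Fin p), kronApply M a i k = ∑ j, M i j * a j k := by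
    intro i k
    show (∑ j, M i j • a j) k = _
    rw [euclid_sum_apply]
    exact Finset.sum_congr rfl fun j _ => rfl
  have hk : ∀ k : Fin p, ∑ i, (∑ j, M i j * a j k)^2 ≤ specNorm M ^ 2 * ∑ j, (a j k)^2 := by
    intro k
    set xk : EuclideanSpace ℝ (Fin n) := (WithLp.equiv 2 _).symm (fun j => a j k) with hxk
    have h1 : ‖Matrix.toEuclideanLin M xk‖ ≤ specNorm M * ‖xk‖ := toEuclideanLin_le M xk
    have h2 : ‖Matrix.toEuclideanLin M xk‖^2 ≤ (specNorm M * ‖xk‖)^2 :=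
      pow_le_pow_left₀ (norm_nonneg _) h1 2
    have h3 : ‖Matrix.toEuclideanLin M xk‖^2 = ∑ i, (∑ j, M i j * a j k)^2 := by
      rw [PiLp.norm_sq_eq_of_L2]
      refine Finset.sum_congr rfl fun i _ => ?_
      have : (Matrix.toEuclideanLin M xk) i = ∑ j, M i j * a j k := by
        rw [hxk, WithLp.equiv_symm_apply, Matrix.toEuclideanLin_apply_piLp_toLp]
        simp [Matrix.mulVec, dotProduct]
      rw [this, Real.norm_eq_abs, sq_abs]
    have h4 : ‖xk‖^2 = ∑ j, (a j k)^2 := by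
      rw [PiLp.norm_sq_eq_of_L2]
      exact Finset.sum_congr rfl fun j _ => by simp [hxk, Real.norm_eq_abs, sq_abs]
    calc ∑ i, (∑ j, M i j * a j k)^2 = ‖Matrix.toEuclideanLin M xk‖^2 := h3.symm
      _ ≤ (specNorm M * ‖xk‖)^2 := h2
      _ = specNorm M ^2 * ‖xk‖^2 := by ring
      _ = specNorm M ^2 * ∑ j, (a j k)^2 := by rw [h4]
  calc ∑ i, ∑ k, (kronApply M a i k)^2 = ∑ k, ∑ i, (∑ j, M i j * a j k)^2 := by
        simp_rw [hcomp]; exact Finset.sum_comm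
    _ ≤ ∑ k, specNorm M ^2 * ∑ j, (a j k)^2 := Finset.sum_le_sum fun k _ => hk k
    _ = specNorm M ^2 * ∑ k, ∑ j, (a j k)^2 := by rw [Finset.mul_sum]
    _ = specNorm M ^2 * ∑ j, ∑ k, (a j k)^2 := by rw [Finset.sum_comm]

open MeasureTheory ProbabilityTheory in
theorem stmt5
    (n p B : ℕ) (hn : 1 ≤ n) (hp : 1 ≤ p) (hB : 1 ≤ B)
    (Ω : Type*) [MeasurableSpace Ω] (P : Measure Ω) [IsProbabilityMeasure P]
    (X : Fin n → Fin B → Ω → EuclideanSpace ℝ (Fin p))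
    (hindep : ∀ i, iIndepFun (X i) P)
    (hL2 : ∀ i b, MemLp (X i b) 2 P)
    (g : Fin n → EuclideanSpace ℝ (Fin p))
    (hmean : ∀ i b, ∫ ω, X i b ω ∂P = g i)
    (ν : Fin n → ℝ)
    (hvar : ∀ i b, ∫ ω, ‖X i b ω - g i‖ ^ 2 ∂P ≤ (ν i) ^ 2)
    (v : Ω → BlockVec n p)
    (hv : ∀ ω i, v ω i = (B : ℝ)⁻¹ • ∑ b, X i b ω)
    (W : Matrix (Fin n) (Fin n) ℝ)
    (hWrow : W.mulVec (fun _ => (1 : ℝ)) = fun _ => 1)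
    (hWcol : Matrix.vecMul (fun _ => (1 : ℝ)) W = fun _ => 1)
    (ρ : ℝ) (hρdef : ρ = specNorm (W - (n : ℝ)⁻¹ • onesMat n))
    (y : Ω → BlockVec n p)
    (hy : ∀ ω, y ω = kronApply W (v ω)) :
    ∫ ω, ‖y ω - consensus (blockAvg (y ω))‖ ^ 2 ∂P ≤
      ρ ^ 2 / B * ∑ i, (ν i) ^ 2 + ρ ^ 2 * ∑ i, ‖g i‖ ^ 2 := by
  have hB0 : (B : ℝ) ≠ 0 := Nat.cast_ne_zero.mpr (by omega)
  -- deterministic decomposition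
  have hdecomp : ∀ ω, y ω - consensus (blockAvg (y ω))
      = kronApply (W - (n : ℝ)⁻¹ • onesMat n) (v ω) := by
    intro ω
    have hcol : ∀ j : Fin n, ∑ i, W i j = 1 := by
      intro j
      have := congrFun hWcol j
      simpa [Matrix.vecMul, dotProduct] using this
    ext i : 1
    show y ω i - consensus (blockAvg (y ω)) i = ∑ j, (W - (n : ℝ)⁻¹ • onesMat n) i j • v ω j
    have hsumy : ∑ j, y ω j = ∑ l, v ω l := by
      calc ∑ j, y ω j = ∑ j, ∑ l, W j l • v ω l := by
            refine Finset.sum_congr rfl fun j _ => ?_; rw [hy]; rfl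
        _ = ∑ l, ∑ j, W j l • v ω l := Finset.sum_comm
        _ = ∑ l, v ω l := by
            refine Finset.sum_congr rfl fun l _ => ?_
            rw [← Finset.sum_smul, hcol, one_smul]
    have hYi : y ω i = ∑ j, W i j • v ω j := by rw [hy]; rfl
    have hCi : consensus (blockAvg (y ω)) i = (n : ℝ)⁻¹ • ∑ l, v ω l := by
      show blockAvg (y ω) = _
      rw [blockAvg, hsumy]
    rw [hYi, hCi]
    have : ∀ j, (W - (n : ℝ)⁻¹ • onesMat n) i j • v ω j
        = W i j • v ω j - (n : ℝ)⁻¹ • v ω j := by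
      intro j
      have he : (W - (n : ℝ)⁻¹ • onesMat n) i j = W i j - (n : ℝ)⁻¹ := by
        simp [onesMat, Matrix.sub_apply, Matrix.smul_apply, smul_eq_mul]
      rw [he, sub_smul]
    rw [Finset.sum_congr rfl fun j _ => this j, Finset.sum_sub_distrib, Finset.smul_sum]
  -- coordinates of X, centered
  set Z : Fin n → Fin B → Fin p → Ω → ℝ := fun i b k ω => X i b ω k - g i k with hZdef
  have hXkmem : ∀ i b k, MemLp (fun ω => X i b ω k) 2 P := by
    intro i b k
    exact (EuclideanSpace.proj (𝕜 := ℝ) k).comp_memLp' (hL2 i b)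
  have hZmem : ∀ i b k, MemLp (Z i b k) 2 P := fun i b k =>
    (hXkmem i b k).sub (memLp_const _)
  have hZint : ∀ i b k, Integrable (Z i b k) P := fun i b k =>
    (hZmem i b k).integrable one_le_two
  have hZmean : ∀ i b k, ∫ ω, Z i b k ω ∂P = 0 := by
    intro i b k
    have h1 : ∫ ω, X i b ω k ∂P = g i k := by
      have := ((EuclideanSpace.proj (𝕜 := ℝ) k).integral_comp_comm
        ((hL2 i b).integrable one_le_two))
      rw [hmean] at this
      exact this
    rw [hZdef]
    simp only
    rw [integral_sub ((hXkmem i b k).integrable one_le_two) (integrable_const _), h1]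
    simp
  have hindZ : ∀ i k (b b' : Fin B), b ≠ b' → IndepFun (Z i b k) (Z i b' k) P := by
    intro i k b b' hne
    have h1 : IndepFun (X i b) (X i b') P := (hindep i).indepFun hne
    have hφ : Measurable (fun x : EuclideanSpace ℝ (Fin p) => x k - g i k) :=
      ((EuclideanSpace.proj (𝕜 := ℝ) k).continuous.measurable).sub measurable_const
    exact h1.comp hφ hφ
  have hSmem : ∀ i k, MemLp (fun ω => ∑ b, Z i b k ω) 2 P := by
    intro i k
    have h := memLp_finsetSum' (μ := P) (p := 2) Finset.univ (fun b (_ : b ∈ Finset.univ) => hZmem i b k)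
    have he : (fun ω => ∑ b, Z i b k ω) = ∑ b, Z i b k := by
      funext ω; rw [Finset.sum_apply]
    rw [he]; exact h
  have hSmean : ∀ i k, ∫ ω, (∑ b, Z i b k ω) ∂P = 0 := by
    intro i k
    rw [integral_finset_sum _ fun b _ => hZint i b k]
    simp [hZmean]
  have hSsq : ∀ i k, ∫ ω, (∑ b, Z i b k ω)^2 ∂P = ∑ b, ∫ ω, (Z i b k ω)^2 ∂P := by
    intro i k
    have hprodint : ∀ b b' : Fin B, Integrable (fun ω => Z i b k ω * Z i b' k ω) P := by
      intro b b'
      rcases eq_or_ne b b' with rfl | hne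
      · simpa [pow_two] using (hZmem i b k).integrable_sq
      · exact (hindZ i k b b' hne).integrable_mul (hZint i b k) (hZint i b' k)
    calc ∫ ω, (∑ b, Z i b k ω)^2 ∂P
        = ∫ ω, ∑ b, ∑ b', Z i b k ω * Z i b' k ω ∂P := by
          congr 1; funext ω; rw [pow_two, Finset.sum_mul_sum]
      _ = ∑ b, ∑ b', ∫ ω, Z i b k ω * Z i b' k ω ∂P := by
          rw [integral_finset_sum _ fun b _ => integrable_finset_sum _ fun b' _ => hprodint b b']
          exact Finset.sum_congr rfl fun b _ =>
            integral_finset_sum _ fun b' _ => hprodint b b'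
      _ = ∑ b, ∫ ω, (Z i b k ω)^2 ∂P := by
          refine Finset.sum_congr rfl fun b _ => ?_
          rw [Finset.sum_eq_single b]
          · simp [pow_two]
          · intro b' _ hne
            have := (hindZ i k b b' (Ne.symm hne)).integral_mul_eq_mul_integral
              (hZint i b k).aestronglyMeasurable (hZint i b' k).aestronglyMeasurable
            calc ∫ ω, Z i b k ω * Z i b' k ω ∂P
                = (∫ ω, Z i b k ω ∂P) * ∫ ω, Z i b' k ω ∂P := this
              _ = 0 := by rw [hZmean, zero_mul]
          · intro h; exact absurd (Finset.mem_univ b) h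
  -- coordinate representation of v
  have hvcoord : ∀ ω i k, v ω i k = (B : ℝ)⁻¹ * (∑ b, Z i b k ω) + g i k := by
    intro ω i k
    have h1 : v ω i k = (B : ℝ)⁻¹ * ∑ b, X i b ω k := by
      rw [hv]
      show ((B : ℝ)⁻¹ • ∑ b, X i b ω) k = _
      rw [PiLp.smul_apply, euclid_sum_apply, smul_eq_mul]
    have h2 : ∑ b, Z i b k ω = (∑ b, X i b ω k) - B * g i k := by
      rw [hZdef]
      simp only
      rw [Finset.sum_sub_distrib, Finset.sum_const, Finset.card_univ, Fintype.card_fin,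
        nsmul_eq_mul]
    rw [h1, h2]
    field_simp
    ring
  have hvkmem : ∀ i k, MemLp (fun ω => v ω i k) 2 P := by
    intro i k
    have : (fun ω => v ω i k)
        = fun ω => (B : ℝ)⁻¹ * (∑ b, Z i b k ω) + g i k := by
      funext ω; exact hvcoord ω i k
    rw [this]
    exact ((hSmem i k).const_mul _).add (memLp_const _)
  have hvksqint : ∀ i k, Integrable (fun ω => (v ω i k)^2) P := fun i k =>
    (hvkmem i k).integrable_sq
  -- key per-coordinate integral identity
  have key : ∀ i k, ∫ ω, (v ω i k)^2 ∂P
      = ((B : ℝ)⁻¹)^2 * ∑ b, ∫ ω, (Z i b k ω)^2 ∂P + (g i k)^2 := by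
    intro i k
    have hS2 : Integrable (fun ω => (∑ b, Z i b k ω)^2) P := (hSmem i k).integrable_sq
    have hS1 : Integrable (fun ω => ∑ b, Z i b k ω) P := (hSmem i k).integrable one_le_two
    have h1 : (fun ω => (v ω i k)^2)
        = fun ω => ((B : ℝ)⁻¹)^2 * (∑ b, Z i b k ω)^2
            + (2 * g i k * (B : ℝ)⁻¹) * (∑ b, Z i b k ω) + (g i k)^2 := by
      funext ω; rw [hvcoord]; ring
    have ha1 : Integrable (fun ω => ((B : ℝ)⁻¹)^2 * (∑ b, Z i b k ω)^2
        + (2 * g i k * (B : ℝ)⁻¹) * (∑ b, Z i b k ω)) P :=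
      (hS2.const_mul _).add (hS1.const_mul _)
    have hc1 : Integrable (fun ω => ((B : ℝ)⁻¹)^2 * (∑ b, Z i b k ω)^2) P :=
      hS2.const_mul _
    have hc2 : Integrable (fun ω => (2 * g i k * (B : ℝ)⁻¹) * (∑ b, Z i b k ω)) P :=
      hS1.const_mul _
    rw [h1, integral_add ha1 (integrable_const _), integral_add hc1 hc2,
      integral_const_mul, integral_const_mul, hSmean, hSsq, integral_const]
    simp [measure_univ]
  -- per-block bound
  have hnormsq : ∀ (x : EuclideanSpace ℝ (Fin p)), ‖x‖^2 = ∑ k, (x k)^2 := by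
    intro x
    rw [PiLp.norm_sq_eq_of_L2]
    exact Finset.sum_congr rfl fun k _ => by rw [Real.norm_eq_abs, sq_abs]
  have hblockint : ∀ i, Integrable (fun ω => ‖v ω i‖^2) P := by
    intro i
    have : (fun ω => ‖v ω i‖^2) = fun ω => ∑ k, (v ω i k)^2 := by
      funext ω; exact hnormsq (v ω i)
    rw [this]
    exact integrable_finset_sum _ fun k _ => hvksqint i k
  have hi : ∀ i, ∫ ω, ‖v ω i‖^2 ∂P ≤ (ν i)^2 / B + ‖g i‖^2 := by
    intro i
    have hsplit : ∫ ω, ‖v ω i‖^2 ∂P = ∑ k, ∫ ω, (v ω i k)^2 ∂P := by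
      rw [show (fun ω => ‖v ω i‖^2) = fun ω => ∑ k, (v ω i k)^2 from
        funext fun ω => hnormsq (v ω i)]
      exact integral_finset_sum _ fun k _ => hvksqint i k
    have hZb : ∀ b, ∑ k, ∫ ω, (Z i b k ω)^2 ∂P ≤ (ν i)^2 := by
      intro b
      have h1 : ∑ k, ∫ ω, (Z i b k ω)^2 ∂P = ∫ ω, ‖X i b ω - g i‖^2 ∂P := by
        rw [← integral_finset_sum _ fun k _ => (hZmem i b k).integrable_sq]
        congr 1; funext ω
        rw [hnormsq (X i b ω - g i)]
        exact Finset.sum_congr rfl fun k _ => by rw [PiLp.sub_apply]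
      rw [h1]; exact hvar i b
    calc ∫ ω, ‖v ω i‖^2 ∂P = ∑ k, ∫ ω, (v ω i k)^2 ∂P := hsplit
      _ = ((B : ℝ)⁻¹)^2 * ∑ b, ∑ k, ∫ ω, (Z i b k ω)^2 ∂P + ∑ k, (g i k)^2 := by
          rw [Finset.sum_congr rfl fun k (_ : k ∈ Finset.univ) => key i k,
            Finset.sum_add_distrib, ← Finset.mul_sum, Finset.sum_comm]
      _ ≤ ((B : ℝ)⁻¹)^2 * ∑ (_b : Fin B), (ν i)^2 + ∑ k, (g i k)^2 := by
          have h0 : (0:ℝ) ≤ ((B : ℝ)⁻¹)^2 := sq_nonneg _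
          exact add_le_add (mul_le_mul_of_nonneg_left
            (Finset.sum_le_sum fun b _ => hZb b) h0) le_rfl
      _ = (ν i)^2 / B + ‖g i‖^2 := by
          rw [Finset.sum_const, Finset.card_univ, Fintype.card_fin, nsmul_eq_mul,
            hnormsq (g i)]
          field_simp
  -- final assembly
  have hnormv : (fun ω => ‖v ω‖^2) = fun ω => ∑ i, ‖v ω i‖^2 :=
    funext fun ω => PiLp.norm_sq_eq_of_L2 _ (v ω)
  have hvnormint : Integrable (fun ω => ‖v ω‖^2) P := by
    rw [hnormv]; exact integrable_finset_sum _ fun i _ => hblockint i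
  have hpt : ∀ ω, ‖y ω - consensus (blockAvg (y ω))‖^2 ≤ ρ^2 * ‖v ω‖^2 := by
    intro ω; rw [hdecomp ω, hρdef]; exact kron_sq_bound _ _
  calc ∫ ω, ‖y ω - consensus (blockAvg (y ω))‖^2 ∂P
      ≤ ∫ ω, ρ^2 * ‖v ω‖^2 ∂P :=
        integral_mono_of_nonneg (Filter.Eventually.of_forall fun ω => sq_nonneg _)
          (hvnormint.const_mul _) (Filter.Eventually.of_forall hpt)
    _ = ρ^2 * ∫ ω, ‖v ω‖^2 ∂P := integral_const_mul _ _
    _ = ρ^2 * ∑ i, ∫ ω, ‖v ω i‖^2 ∂P := by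
        rw [hnormv, integral_finset_sum _ fun i _ => hblockint i]
    _ ≤ ρ^2 * ∑ i, ((ν i)^2 / B + ‖g i‖^2) :=
        mul_le_mul_of_nonneg_left (Finset.sum_le_sum fun i _ => hi i) (sq_nonneg ρ)
    _ = ρ^2 / B * ∑ i, (ν i)^2 + ρ^2 * ∑ i, ‖g i‖^2 := by
        rw [Finset.sum_add_distrib, ← Finset.sum_div, mul_add]
        ring
end

section
/- Let ρ ∈ [0,1), 0 < μ ≤ G, κ := G/μ, Φ > 0, L ≥ 0, A₁ ≥ 0, T ≥ 1, and suppose 0 < η < μ(1−ρ²)³/(κ√(1632000(L² + Φ²))). Let (a_t)_{t=0}^T and (d_t)_{t=0}^T be nonnegative real numbers with a_0 = 0, and (y_t)_{t=1}^T nonnegative real numbers, such that for all 1 ≤ t ≤ T: a_t ≤ ((1+ρ²)/2) a_{t−1} + (G²η²/(μ²(1−ρ²))) d_{t−1} + (4η²/(μ²(1−ρ²))) y_t, and such that ∑_{t=1}^T y_t ≤ A₁ + (1632Φ²/(1−ρ²)²) ∑_{t=0}^T a_t + (960Φ²κ²η²/(1−ρ²)²) ∑_{t=0}^{T−1} d_t.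 Then ∑_{t=0}^T a_t ≤ 16A₁η²/(μ²(1−ρ²)²) + (10G²η²/(μ²(1−ρ²)³)) ∑_{t=0}^T d_t. -/
open scoped BigOperators

set_option maxHeartbeats 1000000 in
theorem stmt6
    (ρ μ G κ Φ L A₁ η : ℝ) (T : ℕ)
    (hρ0 : 0 ≤ ρ) (hρ1 : ρ < 1)
    (hμ : 0 < μ) (hμG : μ ≤ G) (hκ : κ = G / μ)
    (hΦ : 0 < Φ) (hL : 0 ≤ L) (hA₁ : 0 ≤ A₁) (hT : 1 ≤ T)
    (hη0 : 0 < η)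
    (hη1 : η < μ * (1 - ρ ^ 2) ^ 3 / (κ * Real.sqrt (1632000 * (L ^ 2 + Φ ^ 2))))
    (a d : ℕ → ℝ) (y : ℕ → ℝ)
    (ha : ∀ t ≤ T, 0 ≤ a t) (hd : ∀ t ≤ T, 0 ≤ d t) (ha0 : a 0 = 0)
    (hy : ∀ t, 1 ≤ t → t ≤ T → 0 ≤ y t)
    (hrec : ∀ t, 1 ≤ t → t ≤ T →
      a t ≤ (1 + ρ ^ 2) / 2 * a (t - 1) + G ^ 2 * η ^ 2 / (μ ^ 2 * (1 - ρ ^ 2)) * d (t - 1)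
            + 4 * η ^ 2 / (μ ^ 2 * (1 - ρ ^ 2)) * y t)
    (hsum : ∑ t ∈ Finset.Icc 1 T, y t ≤
      A₁ + 1632 * Φ ^ 2 / (1 - ρ ^ 2) ^ 2 * ∑ t ∈ Finset.range (T + 1), a t
        + 960 * Φ ^ 2 * κ ^ 2 * η ^ 2 / (1 - ρ ^ 2) ^ 2 * ∑ t ∈ Finset.range T, d t) :
    ∑ t ∈ Finset.range (T + 1), a t ≤
      16 * A₁ * η ^ 2 / (μ ^ 2 * (1 - ρ ^ 2) ^ 2)
      + 10 * G ^ 2 * η ^ 2 / (μ ^ 2 * (1 - ρ ^ 2) ^ 3) * ∑ t ∈ Finset.range (T + 1), d t := by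
  have hG : 0 < G := lt_of_lt_of_le hμ hμG
  have hP0 : 0 < 1 - ρ ^ 2 := by nlinarith
  have hPle1 : 1 - ρ ^ 2 ≤ 1 := by nlinarith [sq_nonneg ρ]
  have hκ1 : 1 ≤ κ := by rw [hκ]; exact (one_le_div hμ).mpr hμG
  have hκ0 : 0 < κ := lt_of_lt_of_le one_pos hκ1
  -- key inequality from the step size bound
  have hX : (0:ℝ) < 1632000 * (L ^ 2 + Φ ^ 2) := by positivity
  have hsX : 0 < Real.sqrt (1632000 * (L ^ 2 + Φ ^ 2)) := Real.sqrt_pos.mpr hX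
  have h1 : η * (κ * Real.sqrt (1632000 * (L ^ 2 + Φ ^ 2))) < μ * (1 - ρ ^ 2) ^ 3 :=
    (lt_div_iff₀ (by positivity)).mp hη1
  have h2 : (η * (κ * Real.sqrt (1632000 * (L ^ 2 + Φ ^ 2)))) ^ 2 < (μ * (1 - ρ ^ 2) ^ 3) ^ 2 := by
    have h0 : 0 ≤ η * (κ * Real.sqrt (1632000 * (L ^ 2 + Φ ^ 2))) := by positivity
    exact pow_lt_pow_left₀ h1 h0 (by norm_num)
  have h2' : η ^ 2 * κ ^ 2 * (1632000 * (L ^ 2 + Φ ^ 2)) < μ ^ 2 * (1 - ρ ^ 2) ^ 6 := by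
    have e : (η * (κ * Real.sqrt (1632000 * (L ^ 2 + Φ ^ 2)))) ^ 2
        = η ^ 2 * κ ^ 2 * (1632000 * (L ^ 2 + Φ ^ 2)) := by
      rw [mul_pow, mul_pow, Real.sq_sqrt hX.le]; ring
    have e2 : (μ * (1 - ρ ^ 2) ^ 3) ^ 2 = μ ^ 2 * (1 - ρ ^ 2) ^ 6 := by ring
    rw [e, e2] at h2; exact h2
  have hkey : 1632000 * Φ ^ 2 * κ ^ 2 * η ^ 2 ≤ μ ^ 2 * (1 - ρ ^ 2) ^ 6 := by
    have hL2 : (0:ℝ) ≤ η ^ 2 * κ ^ 2 * L ^ 2 := by positivity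
    nlinarith [h2', hL2]
  -- sum manipulations
  have hsum_a : ∑ i ∈ Finset.range (T + 1), a i = ∑ i ∈ Finset.range T, a (i + 1) := by
    rw [Finset.sum_range_succ']; simp [ha0]
  have haT : ∑ i ∈ Finset.range T, a i ≤ ∑ i ∈ Finset.range (T + 1), a i := by
    rw [Finset.sum_range_succ]; linarith [ha T le_rfl]
  have hdT : ∑ i ∈ Finset.range T, d i ≤ ∑ i ∈ Finset.range (T + 1), d i := by
    rw [Finset.sum_range_succ]; linarith [hd T le_rfl]
  have hy' : ∑ t ∈ Finset.Icc 1 T, y t = ∑ i ∈ Finset.range T, y (i + 1) := by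
    rw [show Finset.Icc 1 T = Finset.Ico 1 (T + 1) from by rw [Finset.Ico_add_one_right_eq_Icc],
      Finset.sum_Ico_eq_sum_range]
    exact Finset.sum_congr (by simp) fun i _ => by rw [add_comm]
  have hrecsum : ∑ i ∈ Finset.range T, a (i + 1) ≤
      ∑ i ∈ Finset.range T, ((1 + ρ ^ 2) / 2 * a i
        + G ^ 2 * η ^ 2 / (μ ^ 2 * (1 - ρ ^ 2)) * d i
        + 4 * η ^ 2 / (μ ^ 2 * (1 - ρ ^ 2)) * y (i + 1)) := by
    apply Finset.sum_le_sum
    intro i hi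
    have hiT : i + 1 ≤ T := Finset.mem_range.mp hi
    have := hrec (i + 1) (Nat.le_add_left 1 i) hiT
    simpa using this
  rw [hsum_a]
  rw [hy', hsum_a] at hsum
  rw [hsum_a] at haT
  set S := ∑ i ∈ Finset.range T, a (i + 1) with hS
  set SA := ∑ i ∈ Finset.range T, a i with hSA
  set D := ∑ i ∈ Finset.range (T + 1), d i with hD
  set D' := ∑ i ∈ Finset.range T, d i with hD'
  set Y := ∑ i ∈ Finset.range T, y (i + 1) with hY
  have hSnn : 0 ≤ S := Finset.sum_nonneg fun i hi =>
    ha (i + 1) (Finset.mem_range.mp hi)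
  have hDnn' : 0 ≤ D' := Finset.sum_nonneg fun i hi =>
    hd i (le_of_lt (Finset.mem_range.mp hi))
  have hDnn : 0 ≤ D := le_trans hDnn' hdT
  have hYnn : 0 ≤ Y := Finset.sum_nonneg fun i hi =>
    hy (i + 1) (Nat.le_add_left 1 i) (Finset.mem_range.mp hi)
  have hrecsum2 : S ≤ (1 + ρ ^ 2) / 2 * SA + G ^ 2 * η ^ 2 / (μ ^ 2 * (1 - ρ ^ 2)) * D'
      + 4 * η ^ 2 / (μ ^ 2 * (1 - ρ ^ 2)) * Y := by
    calc S ≤ _ := hrecsum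
    _ = (1 + ρ ^ 2) / 2 * SA + G ^ 2 * η ^ 2 / (μ ^ 2 * (1 - ρ ^ 2)) * D'
        + 4 * η ^ 2 / (μ ^ 2 * (1 - ρ ^ 2)) * Y := by
      rw [Finset.sum_add_distrib, Finset.sum_add_distrib, ← Finset.mul_sum,
        ← Finset.mul_sum, ← Finset.mul_sum]
  have hi0 : S ≤ (1 + ρ ^ 2) / 2 * S + G ^ 2 * η ^ 2 / (μ ^ 2 * (1 - ρ ^ 2)) * D'
      + 4 * η ^ 2 / (μ ^ 2 * (1 - ρ ^ 2)) * Y := by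
    have hc : (1 + ρ ^ 2) / 2 * SA ≤ (1 + ρ ^ 2) / 2 * S :=
      mul_le_mul_of_nonneg_left haT (by positivity)
    linarith
  have hpos1 : (0:ℝ) < μ ^ 2 * (1 - ρ ^ 2) := by positivity
  have hi' : μ ^ 2 * (1 - ρ ^ 2) * S ≤ μ ^ 2 * (1 - ρ ^ 2) * ((1 + ρ ^ 2) / 2) * S
      + G ^ 2 * η ^ 2 * D' + 4 * η ^ 2 * Y := by
    have h := mul_le_mul_of_nonneg_left hi0 hpos1.le
    have e1 : μ ^ 2 * (1 - ρ ^ 2) * (G ^ 2 * η ^ 2 / (μ ^ 2 * (1 - ρ ^ 2)) * D')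
        = G ^ 2 * η ^ 2 * D' := by field_simp
    have e2 : μ ^ 2 * (1 - ρ ^ 2) * (4 * η ^ 2 / (μ ^ 2 * (1 - ρ ^ 2)) * Y)
        = 4 * η ^ 2 * Y := by field_simp
    rw [mul_add, mul_add, e1, e2] at h
    linarith
  have hii' : (1 - ρ ^ 2) ^ 2 * Y ≤ (1 - ρ ^ 2) ^ 2 * A₁ + 1632 * Φ ^ 2 * S
      + 960 * Φ ^ 2 * κ ^ 2 * η ^ 2 * D' := by
    have h := mul_le_mul_of_nonneg_left hsum (by positivity : (0:ℝ) ≤ (1 - ρ ^ 2) ^ 2)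
    have e3 : (1 - ρ ^ 2) ^ 2 * (1632 * Φ ^ 2 / (1 - ρ ^ 2) ^ 2 * S) = 1632 * Φ ^ 2 * S := by
      field_simp
    have e4 : (1 - ρ ^ 2) ^ 2 * (960 * Φ ^ 2 * κ ^ 2 * η ^ 2 / (1 - ρ ^ 2) ^ 2 * D')
        = 960 * Φ ^ 2 * κ ^ 2 * η ^ 2 * D' := by field_simp
    rw [mul_add, mul_add, e3, e4] at h
    linarith
  have h3 : μ ^ 2 * (1 - ρ ^ 2) ^ 2 / 2 * S ≤ G ^ 2 * η ^ 2 * D' + 4 * η ^ 2 * Y := by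
    linarith [hi']
  obtain ⟨P, hPdef⟩ : ∃ P : ℝ, P = 1 - ρ ^ 2 := ⟨_, rfl⟩
  rw [← hPdef] at h3 hii' hkey hP0 hPle1 ⊢
  have hP6 : P ^ 6 ≤ P ^ 4 := pow_le_pow_of_le_one hP0.le hPle1 (by norm_num)
  have hP6' : P ^ 6 ≤ P ^ 2 := pow_le_pow_of_le_one hP0.le hPle1 (by norm_num)
  have hκsq : 1 ≤ κ ^ 2 := by
    have h := mul_le_mul hκ1 hκ1 zero_le_one hκ0.le
    simpa [pow_two] using h
  have h4 := mul_le_mul_of_nonneg_left h3 (by positivity : (0:ℝ) ≤ P ^ 2)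
  have h5 := mul_le_mul_of_nonneg_left hii' (by positivity : (0:ℝ) ≤ 4 * η ^ 2)
  have h6 : μ ^ 2 * P ^ 4 / 2 * S ≤ G ^ 2 * η ^ 2 * P ^ 2 * D'
      + 4 * η ^ 2 * P ^ 2 * A₁ + 6528 * Φ ^ 2 * η ^ 2 * S
      + 3840 * Φ ^ 2 * κ ^ 2 * η ^ 4 * D' := by linarith [h4, h5]
  have h7 : 6528 * Φ ^ 2 * η ^ 2 * S ≤ (1 / 250) * (μ ^ 2 * P ^ 4) * S := by
    have hΦη : 6528 * Φ ^ 2 * η ^ 2 ≤ (1 / 250) * (μ ^ 2 * P ^ 4) := by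
      have hA := mul_le_mul_of_nonneg_left hκsq
        (by positivity : (0:ℝ) ≤ 6528 * Φ ^ 2 * η ^ 2)
      have hB := mul_le_mul_of_nonneg_left hP6 (sq_nonneg μ)
      linarith [hA, hB, hkey]
    exact mul_le_mul_of_nonneg_right hΦη hSnn
  have h8 : 3840 * Φ ^ 2 * κ ^ 2 * η ^ 4 * D' ≤
      (1 / 425) * (G ^ 2 * η ^ 2 * P ^ 2) * D' := by
    have hμ2G2 : μ ^ 2 ≤ G ^ 2 := by
      have h := mul_le_mul hμG hμG hμ.le hG.le
      simpa [pow_two] using h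
    have hΦη2 : 3840 * Φ ^ 2 * κ ^ 2 * η ^ 4 ≤ (1 / 425) * (G ^ 2 * η ^ 2 * P ^ 2) := by
      have hA := mul_le_mul_of_nonneg_right hkey (sq_nonneg η)
      have hC : μ ^ 2 * P ^ 6 ≤ G ^ 2 * P ^ 2 :=
        mul_le_mul hμ2G2 hP6' (by positivity) (sq_nonneg G)
      have hC' := mul_le_mul_of_nonneg_right hC (sq_nonneg η)
      linarith [hA, hC']
    exact mul_le_mul_of_nonneg_right hΦη2 hDnn'
  have h9 : (62 / 125) * (μ ^ 2 * P ^ 4) * S ≤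
      (426 / 425) * (G ^ 2 * η ^ 2 * P ^ 2) * D' + 4 * η ^ 2 * P ^ 2 * A₁ := by
    linarith [h6, h7, h8]
  have key : S * (μ ^ 2 * P ^ 4) ≤
      16 * A₁ * η ^ 2 * P ^ 2 + 10 * G ^ 2 * η ^ 2 * P * D := by
    have hd2 : (426 / 425) * (G ^ 2 * η ^ 2 * P ^ 2) * D' ≤
        (426 / 425) * (G ^ 2 * η ^ 2 * P ^ 2) * D :=
      mul_le_mul_of_nonneg_left hdT (by positivity)
    have t1 : (0:ℝ) ≤ G ^ 2 * η ^ 2 * P * (1 - P) * D :=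
      mul_nonneg (mul_nonneg (by positivity) (by linarith)) hDnn
    have t2 : (0:ℝ) ≤ A₁ * η ^ 2 * P ^ 2 := by positivity
    have t3 : (0:ℝ) ≤ G ^ 2 * η ^ 2 * P ^ 2 * D := mul_nonneg (by positivity) hDnn
    linarith [h9, hd2, t1, t2, t3]
  have hpos4 : (0:ℝ) < μ ^ 2 * P ^ 4 := by positivity
  have hμne : μ ≠ 0 := ne_of_gt hμ
  have hPne : P ≠ 0 := ne_of_gt hP0
  rw [show 16 * A₁ * η ^ 2 / (μ ^ 2 * P ^ 2)
      + 10 * G ^ 2 * η ^ 2 / (μ ^ 2 * P ^ 3) * D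
      = (16 * A₁ * η ^ 2 * P ^ 2 + 10 * G ^ 2 * η ^ 2 * P * D)
        / (μ ^ 2 * P ^ 4) from by field_simp]
  rw [le_div_iff₀ hpos4]
  exact key
end

section
/- Let ρ ∈ [0,1), 0 < μ ≤ G, κ := G/μ, Φ > 0, 0 < β < 1, η > 0, ν ≥ 0, V₀ ≥ 0, and let n, B, T be positive integers with T ≥ 2. Let (a_t)_{t=0}^T, (d_t)_{t=0}^T, (e_t)_{t=0}^T, and (y_t)_{t=1}^T be nonnegative real numbers such that: (i) y_1 ≤ nρ²ν²/B + ρ²V₀; (ii) for all 1 ≤ t ≤ T−1, y_{t+1} ≤ ((3+ρ²)/4) y_t + 8nβ²ν²/(1−ρ²) + (8β²/(1−ρ²)) e_{t−1} + (216Φ²/(1−ρ²)) a_{t−1} + (144Φ²κ²η²/(1−ρ²)) d_{t−1}; and (iii) ∑_{t=0}^T e_t ≤ nν²/(βB) + 2nβTν² + (12η²Φ²/β) ∑_{t=0}^{T−1} d_t + (24Φ²/β) ∑_{t=0}^T a_t. Then ∑_{t=1}^T y_t ≤ A₁ + (1632Φ²/(1−ρ²)²) ∑_{t=0}^T a_t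 + (960Φ²κ²η²/(1−ρ²)²) ∑_{t=0}^{T−1} d_t, where A₁ := 4nρ²ν²/(B(1−ρ²)) + 32nTβ²ν²/(1−ρ²)² + 32nβν²/(B(1−ρ²)²) + 64nTν²β³/(1−ρ²)² + 4ρ²V₀/(1−ρ²). -/
open scoped BigOperators

set_option maxHeartbeats 1600000 in
theorem stmt7
    (ρ μ G κ Φ β η ν V₀ : ℝ) (n B T : ℕ)
    (hρ0 : 0 ≤ ρ) (hρ1 : ρ < 1)
    (hμ : 0 < μ) (hμG : μ ≤ G) (hκ : κ = G / μ)
    (hΦ : 0 < Φ) (hβ0 : 0 < β) (hβ1 : β < 1) (hη : 0 < η)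
    (hν : 0 ≤ ν) (hV₀ : 0 ≤ V₀)
    (hn : 1 ≤ n) (hB : 1 ≤ B) (hT : 2 ≤ T)
    (a d e : ℕ → ℝ) (y : ℕ → ℝ)
    (ha : ∀ t ≤ T, 0 ≤ a t) (hd : ∀ t ≤ T, 0 ≤ d t) (he : ∀ t ≤ T, 0 ≤ e t)
    (hy : ∀ t, 1 ≤ t → t ≤ T → 0 ≤ y t)
    (hy1 : y 1 ≤ n * ρ ^ 2 * ν ^ 2 / B + ρ ^ 2 * V₀)
    (hrec : ∀ t, 1 ≤ t → t ≤ T - 1 →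
      y (t + 1) ≤ (3 + ρ ^ 2) / 4 * y t + 8 * n * β ^ 2 * ν ^ 2 / (1 - ρ ^ 2)
        + 8 * β ^ 2 / (1 - ρ ^ 2) * e (t - 1)
        + 216 * Φ ^ 2 / (1 - ρ ^ 2) * a (t - 1)
        + 144 * Φ ^ 2 * κ ^ 2 * η ^ 2 / (1 - ρ ^ 2) * d (t - 1))
    (hesum : ∑ t ∈ Finset.range (T + 1), e t ≤
      n * ν ^ 2 / (β * B) + 2 * n * β * T * ν ^ 2
        + 12 * η ^ 2 * Φ ^ 2 / β * ∑ t ∈ Finset.range T, d t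
        + 24 * Φ ^ 2 / β * ∑ t ∈ Finset.range (T + 1), a t)
    (A₁ : ℝ)
    (hA₁ : A₁ = 4 * n * ρ ^ 2 * ν ^ 2 / (B * (1 - ρ ^ 2))
        + 32 * n * T * β ^ 2 * ν ^ 2 / (1 - ρ ^ 2) ^ 2
        + 32 * n * β * ν ^ 2 / (B * (1 - ρ ^ 2) ^ 2)
        + 64 * n * T * ν ^ 2 * β ^ 3 / (1 - ρ ^ 2) ^ 2
        + 4 * ρ ^ 2 * V₀ / (1 - ρ ^ 2)) :
    ∑ t ∈ Finset.Icc 1 T, y t ≤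
      A₁ + 1632 * Φ ^ 2 / (1 - ρ ^ 2) ^ 2 * ∑ t ∈ Finset.range (T + 1), a t
        + 960 * Φ ^ 2 * κ ^ 2 * η ^ 2 / (1 - ρ ^ 2) ^ 2 * ∑ t ∈ Finset.range T, d t := by
  have hP : 0 < 1 - ρ ^ 2 := by nlinarith
  have hBpos : (0:ℝ) < (B:ℝ) := by exact_mod_cast Nat.lt_of_lt_of_le Nat.zero_lt_one hB
  have hκ1 : (1:ℝ) ≤ κ := by
    rw [hκ, le_div_iff₀ hμ]; linarith
  set S := ∑ t ∈ Finset.Icc 1 T, y t with hSdef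
  set A := ∑ t ∈ Finset.range (T + 1), a t with hAdef
  set D := ∑ t ∈ Finset.range T, d t with hDdef
  set E := ∑ t ∈ Finset.range (T + 1), e t with hEdef
  have hA0 : 0 ≤ A := Finset.sum_nonneg fun t ht => ha t (by
    simp only [Finset.mem_range] at ht; omega)
  have hD0 : 0 ≤ D := Finset.sum_nonneg fun t ht => hd t (by
    simp only [Finset.mem_range] at ht; omega)
  -- generic reindexing lemmas
  have shift1 : ∀ f : ℕ → ℝ, ∑ t ∈ Finset.Icc 1 (T - 1), f (t + 1)
      = ∑ t ∈ Finset.Icc 2 T, f t := by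
    intro f
    rw [show Finset.Icc 2 T = Finset.map (addRightEmbedding 1) (Finset.Icc 1 (T - 1)) by
      rw [Finset.map_add_right_Icc]; congr 1; omega]
    rw [Finset.sum_map]
    rfl
  have shift2 : ∀ f : ℕ → ℝ, ∑ t ∈ Finset.Icc 1 (T - 1), f (t - 1)
      = ∑ t ∈ Finset.Icc 0 (T - 2), f t := by
    intro f
    rw [show Finset.Icc 1 (T - 1) = Finset.map (addRightEmbedding 1) (Finset.Icc 0 (T - 2)) by
      rw [Finset.map_add_right_Icc]; congr 1 <;> omega]
    rw [Finset.sum_map]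
    apply Finset.sum_congr rfl
    intro x hx
    simp [addRightEmbedding]
  have hsub : ∀ f : ℕ → ℝ, (∀ t ≤ T, 0 ≤ f t) →
      ∑ t ∈ Finset.Icc 0 (T - 2), f t ≤ ∑ t ∈ Finset.range (T + 1), f t := by
    intro f hf
    apply Finset.sum_le_sum_of_subset_of_nonneg
    · intro x hx
      simp only [Finset.mem_Icc, Finset.mem_range] at hx ⊢; omega
    · intro i hi _
      exact hf i (by simp only [Finset.mem_range] at hi; omega)
  have hsubD : ∑ t ∈ Finset.Icc 0 (T - 2), d t ≤ D := by
    apply Finset.sum_le_sum_of_subset_of_nonneg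
    · intro x hx
      simp only [Finset.mem_Icc, Finset.mem_range] at hx ⊢; omega
    · intro i hi _
      exact hd i (by simp only [Finset.mem_range] at hi; omega)
  have hstep : ∑ t ∈ Finset.Icc 2 T, y t ≤
      (3 + ρ ^ 2) / 4 * S + (T : ℝ) * (8 * n * β ^ 2 * ν ^ 2 / (1 - ρ ^ 2))
      + 8 * β ^ 2 / (1 - ρ ^ 2) * E + 216 * Φ ^ 2 / (1 - ρ ^ 2) * A
      + 144 * Φ ^ 2 * κ ^ 2 * η ^ 2 / (1 - ρ ^ 2) * D := by
    have h0 : ∑ t ∈ Finset.Icc 1 (T - 1), y (t + 1) ≤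
        ∑ t ∈ Finset.Icc 1 (T - 1), ((3 + ρ ^ 2) / 4 * y t
          + 8 * n * β ^ 2 * ν ^ 2 / (1 - ρ ^ 2)
          + 8 * β ^ 2 / (1 - ρ ^ 2) * e (t - 1)
          + 216 * Φ ^ 2 / (1 - ρ ^ 2) * a (t - 1)
          + 144 * Φ ^ 2 * κ ^ 2 * η ^ 2 / (1 - ρ ^ 2) * d (t - 1)) :=
      Finset.sum_le_sum fun t ht => hrec t (Finset.mem_Icc.mp ht).1 (Finset.mem_Icc.mp ht).2
    rw [shift1 y] at h0
    refine h0.trans ?_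
    rw [Finset.sum_add_distrib, Finset.sum_add_distrib, Finset.sum_add_distrib,
      Finset.sum_add_distrib, ← Finset.mul_sum, ← Finset.mul_sum, ← Finset.mul_sum,
      ← Finset.mul_sum, Finset.sum_const, Nat.card_Icc]
    have b1 : (3 + ρ ^ 2) / 4 * ∑ t ∈ Finset.Icc 1 (T - 1), y t ≤ (3 + ρ ^ 2) / 4 * S := by
      apply mul_le_mul_of_nonneg_left _ (by nlinarith)
      apply Finset.sum_le_sum_of_subset_of_nonneg
      · intro x hx; simp only [Finset.mem_Icc] at hx ⊢; omega
      · intro i hi _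
        simp only [Finset.mem_Icc] at hi
        exact hy i hi.1 hi.2
    have b2 : ((T - 1 + 1 - 1 : ℕ) : ℝ) * (8 * n * β ^ 2 * ν ^ 2 / (1 - ρ ^ 2)) ≤
        (T : ℝ) * (8 * n * β ^ 2 * ν ^ 2 / (1 - ρ ^ 2)) := by
      apply mul_le_mul_of_nonneg_right _ (by positivity)
      exact Nat.cast_le.mpr (by omega)
    have b3 : 8 * β ^ 2 / (1 - ρ ^ 2) * ∑ t ∈ Finset.Icc 1 (T - 1), e (t - 1) ≤
        8 * β ^ 2 / (1 - ρ ^ 2) * E := by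
      apply mul_le_mul_of_nonneg_left _ (by positivity)
      rw [shift2 e]; exact hsub e he
    have b4 : 216 * Φ ^ 2 / (1 - ρ ^ 2) * ∑ t ∈ Finset.Icc 1 (T - 1), a (t - 1) ≤
        216 * Φ ^ 2 / (1 - ρ ^ 2) * A := by
      apply mul_le_mul_of_nonneg_left _ (by positivity)
      rw [shift2 a]; exact hsub a ha
    have b5 : 144 * Φ ^ 2 * κ ^ 2 * η ^ 2 / (1 - ρ ^ 2) * ∑ t ∈ Finset.Icc 1 (T - 1), d (t - 1) ≤
        144 * Φ ^ 2 * κ ^ 2 * η ^ 2 / (1 - ρ ^ 2) * D := by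
      apply mul_le_mul_of_nonneg_left _ (by positivity)
      rw [shift2 d]; exact hsubD
    rw [nsmul_eq_mul]
    linarith [b1, b2, b3, b4, b5]
  have hsplit : S = y 1 + ∑ t ∈ Finset.Icc 2 T, y t := by
    rw [hSdef, show Finset.Icc 1 T = insert 1 (Finset.Icc 2 T) by
      ext x; simp only [Finset.mem_Icc, Finset.mem_insert]; omega,
      Finset.sum_insert (by simp)]
  clear_value S A D E
  have hmain : (1 - ρ ^ 2) / 4 * S ≤ y 1
      + (T : ℝ) * (8 * n * β ^ 2 * ν ^ 2 / (1 - ρ ^ 2))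
      + 8 * β ^ 2 / (1 - ρ ^ 2) * E + 216 * Φ ^ 2 / (1 - ρ ^ 2) * A
      + 144 * Φ ^ 2 * κ ^ 2 * η ^ 2 / (1 - ρ ^ 2) * D := by
    have hr : S - (3 + ρ ^ 2) / 4 * S = (1 - ρ ^ 2) / 4 * S := by ring
    linarith [hstep, hsplit, hr]
  have h2 : (1 - ρ ^ 2) ^ 2 * S ≤ 4 * (1 - ρ ^ 2) * y 1 + 32 * n * β ^ 2 * ν ^ 2 * T
      + 32 * β ^ 2 * E + 864 * Φ ^ 2 * A + 576 * Φ ^ 2 * κ ^ 2 * η ^ 2 * D := by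
    have h4 := mul_le_mul_of_nonneg_left hmain (by positivity : (0:ℝ) ≤ 4 * (1 - ρ ^ 2))
    have hne : (1 - ρ ^ 2) ≠ 0 := ne_of_gt hP
    calc (1 - ρ ^ 2) ^ 2 * S = 4 * (1 - ρ ^ 2) * ((1 - ρ ^ 2) / 4 * S) := by ring
    _ ≤ 4 * (1 - ρ ^ 2) * (y 1 + (T : ℝ) * (8 * n * β ^ 2 * ν ^ 2 / (1 - ρ ^ 2))
        + 8 * β ^ 2 / (1 - ρ ^ 2) * E + 216 * Φ ^ 2 / (1 - ρ ^ 2) * A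
        + 144 * Φ ^ 2 * κ ^ 2 * η ^ 2 / (1 - ρ ^ 2) * D) := h4
    _ = 4 * (1 - ρ ^ 2) * y 1 + 32 * n * β ^ 2 * ν ^ 2 * T
        + 32 * β ^ 2 * E + 864 * Φ ^ 2 * A + 576 * Φ ^ 2 * κ ^ 2 * η ^ 2 * D := by
      field_simp
      ring
  have hE2 : 32 * β ^ 2 * E ≤ 32 * β * n * ν ^ 2 / B + 64 * n * β ^ 3 * T * ν ^ 2
      + 384 * β * η ^ 2 * Φ ^ 2 * D + 768 * β * Φ ^ 2 * A := by
    have h4 := mul_le_mul_of_nonneg_left hesum (by positivity : (0:ℝ) ≤ 32 * β ^ 2)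
    have hbne : β ≠ 0 := ne_of_gt hβ0
    have hBne : (B:ℝ) ≠ 0 := ne_of_gt hBpos
    calc 32 * β ^ 2 * E ≤ 32 * β ^ 2 * (n * ν ^ 2 / (β * B) + 2 * n * β * T * ν ^ 2
        + 12 * η ^ 2 * Φ ^ 2 / β * D + 24 * Φ ^ 2 / β * A) := h4
    _ = 32 * β * n * ν ^ 2 / B + 64 * n * β ^ 3 * T * ν ^ 2
        + 384 * β * η ^ 2 * Φ ^ 2 * D + 768 * β * Φ ^ 2 * A := by
      field_simp
      ring
  have hy1b : 4 * (1 - ρ ^ 2) * y 1 ≤ 4 * (1 - ρ ^ 2) * (n * ρ ^ 2 * ν ^ 2 / B + ρ ^ 2 * V₀) :=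
    mul_le_mul_of_nonneg_left hy1 (by positivity)
  have k1 : 768 * β * Φ ^ 2 * A ≤ 768 * Φ ^ 2 * A := by
    have h := mul_nonneg (mul_nonneg (sq_nonneg Φ) hA0) (by linarith : (0:ℝ) ≤ 1 - β)
    nlinarith [h]
  have k2 : 384 * β * η ^ 2 * Φ ^ 2 * D + 576 * Φ ^ 2 * κ ^ 2 * η ^ 2 * D ≤
      960 * Φ ^ 2 * κ ^ 2 * η ^ 2 * D := by
    have hκβ : (0:ℝ) ≤ κ ^ 2 - β := by nlinarith
    have h := mul_nonneg (mul_nonneg (mul_nonneg (sq_nonneg Φ) (sq_nonneg η)) hD0) hκβ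
    nlinarith [h]
  have hne : (1 - ρ ^ 2) ≠ 0 := ne_of_gt hP
  have hBne : (B:ℝ) ≠ 0 := ne_of_gt hBpos
  have hbne : β ≠ 0 := ne_of_gt hβ0
  have hfin2 : (B:ℝ) * ((1 - ρ ^ 2) ^ 2 * S) ≤ (B:ℝ) * ((1 - ρ ^ 2) ^ 2 *
      (A₁ + 1632 * Φ ^ 2 / (1 - ρ ^ 2) ^ 2 * A
        + 960 * Φ ^ 2 * κ ^ 2 * η ^ 2 / (1 - ρ ^ 2) ^ 2 * D)) := by
    have hexp : (B:ℝ) * ((1 - ρ ^ 2) ^ 2 * (A₁ + 1632 * Φ ^ 2 / (1 - ρ ^ 2) ^ 2 * A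
        + 960 * Φ ^ 2 * κ ^ 2 * η ^ 2 / (1 - ρ ^ 2) ^ 2 * D))
        = 4 * n * ρ ^ 2 * ν ^ 2 * (1 - ρ ^ 2) + 32 * n * T * β ^ 2 * ν ^ 2 * B
          + 32 * n * β * ν ^ 2 + 64 * n * T * ν ^ 2 * β ^ 3 * B
          + 4 * ρ ^ 2 * V₀ * (1 - ρ ^ 2) * B + 1632 * Φ ^ 2 * A * B
          + 960 * Φ ^ 2 * κ ^ 2 * η ^ 2 * D * B := by
      rw [hA₁]
      field_simp
    have h2B := mul_le_mul_of_nonneg_left h2 (le_of_lt hBpos)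
    have hE2B : (B:ℝ) * (32 * β ^ 2 * E) ≤ 32 * β * n * ν ^ 2
        + 64 * n * β ^ 3 * T * ν ^ 2 * B + 384 * β * η ^ 2 * Φ ^ 2 * D * B
        + 768 * β * Φ ^ 2 * A * B := by
      calc (B:ℝ) * (32 * β ^ 2 * E) ≤ (B:ℝ) * (32 * β * n * ν ^ 2 / B
          + 64 * n * β ^ 3 * T * ν ^ 2 + 384 * β * η ^ 2 * Φ ^ 2 * D
          + 768 * β * Φ ^ 2 * A) := mul_le_mul_of_nonneg_left hE2 (le_of_lt hBpos)
      _ = 32 * β * n * ν ^ 2 + 64 * n * β ^ 3 * T * ν ^ 2 * B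
          + 384 * β * η ^ 2 * Φ ^ 2 * D * B + 768 * β * Φ ^ 2 * A * B := by
        field_simp
    have hy1B : (B:ℝ) * (4 * (1 - ρ ^ 2) * y 1) ≤ 4 * n * ρ ^ 2 * ν ^ 2 * (1 - ρ ^ 2)
        + 4 * ρ ^ 2 * V₀ * (1 - ρ ^ 2) * B := by
      calc (B:ℝ) * (4 * (1 - ρ ^ 2) * y 1)
          ≤ (B:ℝ) * (4 * (1 - ρ ^ 2) * (n * ρ ^ 2 * ν ^ 2 / B + ρ ^ 2 * V₀)) :=
        mul_le_mul_of_nonneg_left hy1b (le_of_lt hBpos)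
      _ = 4 * n * ρ ^ 2 * ν ^ 2 * (1 - ρ ^ 2) + 4 * ρ ^ 2 * V₀ * (1 - ρ ^ 2) * B := by
        field_simp
    have k1B := mul_le_mul_of_nonneg_left k1 (le_of_lt hBpos)
    have k2B := mul_le_mul_of_nonneg_left k2 (le_of_lt hBpos)
    rw [hexp]
    linarith [h2B, hE2B, hy1B, k1B, k2B]
  have hfin := le_of_mul_le_mul_left hfin2 hBpos
  exact le_of_mul_le_mul_left hfin (by positivity)
end
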